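/- arXiv:1201.6620 — 7 statements merged into one kernel-verified Lean document; each statement's English description precedes it below -/
import Mathlib

section
/- Let T ∈ ℝ and c > 0. If R : (−∞, T) → ℝ is differentiable and satisfies R′(t) ≥ c·R(t)² for every t < T, then R(t) ≥ 0 for every t < T. -/
/-!
If `R t₀ < 0`, then `R' ≥ 0` makes `R` negative on all of `(-∞, t₀]`. There `-1/R` is positive
with derivative `R'/R² ≥ c`, so it would become negative a time `-1/(c R t₀)` before `t₀`:
a negative solution of `R' ≥ c R²` blows up in finite backward time and cannot be ancient.
-/

open Set

theorem monotoneOn_Iio_of_mul_sq_le_deriv {T c : ℝ} (hc : 0 ≤ c) {R : ℝ → ℝ}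
    (hdiff : ∀ t < T, DifferentiableAt ℝ R t) (hineq : ∀ t < T, c * R t ^ 2 ≤ deriv R t) :
    MonotoneOn R (Iio T) := by
  refine monotoneOn_of_deriv_nonneg (convex_Iio T)
    (fun t ht => (hdiff t ht).continuousAt.continuousWithinAt) ?_ ?_
  · rw [interior_Iio]
    exact fun t ht => (hdiff t ht).differentiableWithinAt
  · rw [interior_Iio]
    exact fun t ht => (mul_nonneg hc (sq_nonneg _)).trans (hineq t ht)

theorem hasDerivAt_neg_inv {R : ℝ → ℝ} {t : ℝ} (hR : DifferentiableAt ℝ R t) (h0 : R t ≠ 0) :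
    HasDerivAt (fun u => -(R u)⁻¹) (deriv R t / R t ^ 2) t := by
  simpa only [neg_div, neg_neg] using (hR.hasDerivAt.fun_inv h0).fun_neg

theorem mul_sub_le_inv_sub_inv_of_mul_sq_le_deriv {c s t : ℝ} (hst : s ≤ t) {R : ℝ → ℝ}
    (hdiff : ∀ u ∈ Icc s t, DifferentiableAt ℝ R u) (h0 : ∀ u ∈ Icc s t, R u ≠ 0)
    (hineq : ∀ u ∈ Ioo s t, c * R u ^ 2 ≤ deriv R u) :
    c * (t - s) ≤ (R s)⁻¹ - (R t)⁻¹ := by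
  have hg : ∀ u ∈ Icc s t, HasDerivAt (fun u => -(R u)⁻¹) (deriv R u / R u ^ 2) u :=
    fun u hu => hasDerivAt_neg_inv (hdiff u hu) (h0 u hu)
  have key := Convex.mul_sub_le_image_sub_of_le_deriv (C := c) (convex_Icc s t)
    (fun u hu => (hg u hu).continuousAt.continuousWithinAt)
    (by
      rw [interior_Icc]
      exact fun u hu => (hg u (Ioo_subset_Icc_self hu)).differentiableAt.differentiableWithinAt)
    (by
      rw [interior_Icc]
      intro u hu
      rw [(hg u (Ioo_subset_Icc_self hu)).deriv,
        le_div_iff₀ (pow_two_pos_of_ne_zero (h0 u (Ioo_subset_Icc_self hu)))]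
      exact hineq u hu)
    s (left_mem_Icc.2 hst) t (right_mem_Icc.2 hst) hst
  linarith

/-- If `R` is differentiable on `(-∞, T)` and satisfies `R' ≥ c * R²` there (with `c > 0`),
then `R` is nonnegative on `(-∞, T)`. -/
theorem ancient_riccati_nonneg (T c : ℝ) (hc : 0 < c) (R : ℝ → ℝ)
    (hdiff : ∀ t < T, DifferentiableAt ℝ R t)
    (hineq : ∀ t < T, c * (R t) ^ 2 ≤ deriv R t) :
    ∀ t < T, 0 ≤ R t := by
  intro t ht
  by_contra! hneg
  have hmono := monotoneOn_Iio_of_mul_sq_le_deriv hc.le hdiff hineq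
  set s := t + (R t)⁻¹ / c
  have hst : s < t := add_lt_of_neg_right t (div_neg_of_neg_of_pos (inv_lt_zero.2 hneg) hc)
  have hR_neg : ∀ u ∈ Icc s t, R u < 0 :=
    fun u hu => (hmono (hu.2.trans_lt ht) ht hu.2).trans_lt hneg
  have hgain := mul_sub_le_inv_sub_inv_of_mul_sq_le_deriv hst.le
    (fun u hu => hdiff u (hu.2.trans_lt ht)) (fun u hu => (hR_neg u hu).ne)
    (fun u hu => hineq u (hu.2.trans ht))
  have hcs : c * (t - s) = -(R t)⁻¹ := by simp only [s]; field_simp; ring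
  have hRs : (R s)⁻¹ < 0 := inv_lt_zero.2 (hR_neg s (left_mem_Icc.2 hst.le))
  linarith
end

section
/- For every ε ∈ (0,1) there exists a differentiable function x : [0, ∞) → ℝ such that x(0) = 1 + ε, x′(y) = F(x(y), y) for all y > 0, x is strictly decreasing, and h(y) ≤ x(y) ≤ 1 + ε for all y ≥ 0. -/
/-!
Write `F = N / D` with `N = a (1 - x²) - x y` and `D = -b (1 - x²) + c x y`, where `a, b, c > 0`
and `a c - b = (m - 1) (1 - 2 m ρ)² > 0`. On the region `x ≥ h(y)`, `y ≥ 0` the numerator `N`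
vanishes exactly on the graph of `h` and is negative above it, while `D > 0` away from the single
point `(1, 0)`; this gives `-M ≤ F ≤ 0` with `M = max (a / b) (1 / c)`.

Clamping `x` into the fence `max (h y) (1 + ε - M y) ≤ x ≤ 1 + ε`, which stays clear of `(1, 0)`,
yields a bounded field that is Lipschitz in `x` on every compact time interval (the fenced region
over `[0, T]` is compact and `D > 0` on it), so Picard–Lindelöf and uniqueness give a solution on
`[0, ∞)`. As the clamped field lies in `[-M, 0]`, the solution stays between the line
`1 + ε - M y` and `1 + ε`, and it cannot cross `h` because `F = 0 > h'` on the graph of `h`. Thus it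
never leaves the fence and solves the original equation. It cannot touch `h` at some `y > 0` either,
since `x - h ≥ 0` would then have an interior minimum with derivative `-h'(y) > 0`; hence `F < 0`
along the solution for `y > 0` and it is strictly decreasing.
-/

/-- The right-hand side of the trajectory ODE `dx/dy = F(x,y)` for rotationally symmetric
gradient steady ρ-Einstein solitons (Case 1, `ρ < 1/(2m)`). -/
noncomputable def einsteinF (m ρ x y : ℝ) : ℝ :=
  ((m - 1) * (1 - m * ρ) * (1 - x ^ 2) - x * y) /
    (-(m * (m - 1) * (1 - (m + 1) * ρ) * (1 - x ^ 2)) + (1 + m - 4 * m * ρ) * x * y)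

/-- The lower barrier `h(y)`, the zero locus of the numerator of `F`. -/
noncomputable def einsteinH (m ρ y : ℝ) : ℝ :=
  (-y + Real.sqrt (y ^ 2 + 4 * (m - 1) ^ 2 * (1 - m * ρ) ^ 2)) / (2 * (m - 1) * (1 - m * ρ))

open Set Filter Topology Real
open scoped NNReal

lemma abs_lt_sqrt_sq_add {d : ℝ} (hd : 0 < d) (y : ℝ) : |y| < √(y ^ 2 + d) :=
  (lt_sqrt (abs_nonneg y)).2 (by rw [sq_abs]; linarith)

section Comparison

variable {f f' B B' : ℝ → ℝ} {a : ℝ}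

theorem image_le_of_deriv_right_le_deriv_boundary_Ici
    (hf : ∀ t ≥ a, HasDerivWithinAt f (f' t) (Ici a) t)
    (hB : ∀ t ≥ a, HasDerivWithinAt B (B' t) (Ici a) t) (ha : f a ≤ B a)
    (bound : ∀ t ≥ a, f' t ≤ B' t) {t : ℝ} (ht : a ≤ t) : f t ≤ B t :=
  image_le_of_deriv_right_le_deriv_boundary
    (fun s hs ↦ (hf s hs.1).continuousWithinAt.mono Icc_subset_Ici_self)
    (fun s hs ↦ (hf s hs.1).mono (Ici_subset_Ici.2 hs.1)) ha
    (fun s hs ↦ (hB s hs.1).continuousWithinAt.mono Icc_subset_Ici_self)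
    (fun s hs ↦ (hB s hs.1).mono (Ici_subset_Ici.2 hs.1)) (fun s hs ↦ bound s hs.1) ⟨ht, le_rfl⟩

theorem image_le_of_deriv_right_lt_deriv_boundary_Ici
    (hf : ∀ t ≥ a, HasDerivWithinAt f (f' t) (Ici a) t)
    (hB : ∀ t ≥ a, HasDerivWithinAt B (B' t) (Ici a) t) (ha : f a ≤ B a)
    (bound : ∀ t ≥ a, f t = B t → f' t < B' t) {t : ℝ} (ht : a ≤ t) : f t ≤ B t :=
  image_le_of_deriv_right_lt_deriv_boundary'
    (fun s hs ↦ (hf s hs.1).continuousWithinAt.mono Icc_subset_Ici_self)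
    (fun s hs ↦ (hf s hs.1).mono (Ici_subset_Ici.2 hs.1)) ha
    (fun s hs ↦ (hB s hs.1).continuousWithinAt.mono Icc_subset_Ici_self)
    (fun s hs ↦ (hB s hs.1).mono (Ici_subset_Ici.2 hs.1)) (fun s hs ↦ bound s hs.1) ⟨ht, le_rfl⟩

end Comparison

section GlobalSolution

variable {E : Type*} [NormedAddCommGroup E] [NormedSpace ℝ E] [CompleteSpace E]
  {v : ℝ → E → E} {C : ℝ≥0}

theorem exists_forall_mem_Icc_hasDerivWithinAt_of_norm_le {T : ℝ} (hT : 0 ≤ T) {K : ℝ≥0}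
    (hcont : ∀ x, ContinuousOn (v · x) (Icc 0 T)) (hbound : ∀ t ∈ Icc 0 T, ∀ x, ‖v t x‖ ≤ C)
    (hlip : ∀ t ∈ Icc 0 T, LipschitzWith K (v t)) (x₀ : E) :
    ∃ α : ℝ → E, α 0 = x₀ ∧ ∀ t ∈ Icc 0 T, HasDerivWithinAt α (v t (α t)) (Icc 0 T) t := by
  have hpl : IsPicardLindelof v (⟨0, le_rfl, hT⟩ : Icc 0 T) x₀ (C * T.toNNReal) 0 C K :=
    { lipschitzOnWith := fun t ht ↦ (hlip t ht).lipschitzOnWith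
      continuousOn := fun x _ ↦ hcont x
      norm_le := fun t ht x _ ↦ hbound t ht x
      mul_max_le := by simp [hT] }
  exact hpl.exists_eq_forall_mem_Icc_hasDerivWithinAt₀

theorem exists_forall_hasDerivWithinAt_Ici_of_norm_le
    (hcont : ∀ x, ContinuousOn (v · x) (Ici 0)) (hbound : ∀ t ≥ 0, ∀ x, ‖v t x‖ ≤ C)
    (hlip : ∀ T, ∃ K, ∀ t ∈ Icc 0 T, LipschitzWith K (v t)) (x₀ : E) :
    ∃ α : ℝ → E, α 0 = x₀ ∧ ∀ t ≥ 0, HasDerivWithinAt α (v t (α t)) (Ici 0) t := by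
  choose α hα0 hα using fun k : ℕ ↦
    have hT : (0 : ℝ) ≤ k + 1 := by positivity
    have ⟨K, hK⟩ := hlip (k + 1)
    exists_forall_mem_Icc_hasDerivWithinAt_of_norm_le hT
      (fun x ↦ (hcont x).mono Icc_subset_Ici_self) (fun t ht ↦ hbound t ht.1) hK x₀
  have hderiv (k : ℕ) {t : ℝ} (ht : t ∈ Ico (0 : ℝ) (k + 1)) :
      HasDerivWithinAt (α k) (v t (α k t)) (Ici t) t :=
    (hα k t (Ico_subset_Icc_self ht)).mono_of_mem_nhdsWithin <|
      mem_of_superset (inter_mem_nhdsWithin _ (Iio_mem_nhds ht.2))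
        fun s hs ↦ ⟨ht.1.trans hs.1, hs.2.le⟩
  have hagree (j k : ℕ) {t : ℝ} (ht₀ : 0 ≤ t) (hj : t ≤ (j : ℝ) + 1) (hk : t ≤ (k : ℝ) + 1) :
      α j t = α k t := by
    obtain ⟨K, hK⟩ := hlip t
    refine ODE_solution_unique_of_mem_Icc_right (s := fun _ ↦ univ)
      (fun s hs ↦ (hK s (Ico_subset_Icc_self hs)).lipschitzOnWith) ?_
      (fun s hs ↦ hderiv j ⟨hs.1, hs.2.trans_le hj⟩) (fun _ _ ↦ mem_univ _) ?_
      (fun s hs ↦ hderiv k ⟨hs.1, hs.2.trans_le hk⟩) (fun _ _ ↦ mem_univ _)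
      (by rw [hα0, hα0]) ⟨ht₀, le_rfl⟩
    · exact fun s hs ↦ (hα j s ⟨hs.1, hs.2.trans hj⟩).continuousWithinAt.mono
        (Icc_subset_Icc_right hj)
    · exact fun s hs ↦ (hα k s ⟨hs.1, hs.2.trans hk⟩).continuousWithinAt.mono
        (Icc_subset_Icc_right hk)
  refine ⟨fun t ↦ α ⌊t⌋₊ t, by simp [hα0], fun t ht ↦ ?_⟩
  have hlt : t < ⌊t⌋₊ + 1 := Nat.lt_floor_add_one t
  have hnhds : Icc 0 (⌊t⌋₊ + 1 : ℝ) ∈ 𝓝[Ici 0] t :=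
    mem_of_superset (inter_mem_nhdsWithin _ (Iio_mem_nhds hlt)) fun s hs ↦ ⟨hs.1, hs.2.le⟩
  have heq : (fun s ↦ α ⌊s⌋₊ s) =ᶠ[𝓝[Ici 0] t] α ⌊t⌋₊ :=
    mem_of_superset hnhds fun s hs ↦ hagree _ _ hs.1 (Nat.lt_floor_add_one s).le hs.2
  exact ((hα ⌊t⌋₊ t ⟨ht, hlt.le⟩).mono_of_mem_nhdsWithin hnhds).congr_of_eventuallyEq heq
    (hagree _ _ ht hlt.le hlt.le)

end GlobalSolution

namespace EinsteinSoliton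

def num (a x y : ℝ) : ℝ := a * (1 - x ^ 2) - x * y

def den (b c x y : ℝ) : ℝ := -(b * (1 - x ^ 2)) + c * x * y

noncomputable def field (a b c x y : ℝ) : ℝ := num a x y / den b c x y

noncomputable def barrier (a y : ℝ) : ℝ := (-y + √(y ^ 2 + 4 * a ^ 2)) / (2 * a)

variable {a b c : ℝ}

lemma barrier_pos (ha : 0 < a) (y : ℝ) : 0 < barrier a y :=
  have := abs_lt_sqrt_sq_add (d := 4 * a ^ 2) (by positivity) y
  div_pos (by linarith [le_abs_self y]) (by positivity)

lemma barrier_zero (ha : 0 < a) : barrier a 0 = 1 := by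
  rw [barrier, show (0 : ℝ) ^ 2 + 4 * a ^ 2 = (2 * a) ^ 2 by ring, sqrt_sq (by positivity)]
  field_simp
  ring

lemma num_barrier (ha : 0 < a) (y : ℝ) : num a (barrier a y) y = 0 := by
  have hs : √(y ^ 2 + 4 * a ^ 2) ^ 2 = y ^ 2 + 4 * a ^ 2 := sq_sqrt (by positivity)
  rw [num, barrier]
  generalize √(y ^ 2 + 4 * a ^ 2) = s at hs
  field_simp
  linear_combination (-1) * hs

lemma hasDerivAt_barrier (ha : 0 < a) (y : ℝ) :
    HasDerivAt (barrier a) ((y / √(y ^ 2 + 4 * a ^ 2) - 1) / (2 * a)) y := by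
  have hs : HasDerivAt (fun y ↦ √(y ^ 2 + 4 * a ^ 2)) (2 * y / (2 * √(y ^ 2 + 4 * a ^ 2))) y := by
    simpa using ((hasDerivAt_pow 2 y).add_const (4 * a ^ 2)).sqrt (by positivity)
  refine (((hasDerivAt_id' y).neg.add hs).div_const (2 * a)).congr_deriv ?_
  rw [mul_div_mul_left _ _ two_ne_zero]
  ring

lemma barrier_deriv_neg (ha : 0 < a) (y : ℝ) : (y / √(y ^ 2 + 4 * a ^ 2) - 1) / (2 * a) < 0 := by
  have habs := abs_lt_sqrt_sq_add (d := 4 * a ^ 2) (by positivity) y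
  have hs : 0 < √(y ^ 2 + 4 * a ^ 2) := (abs_nonneg y).trans_lt habs
  have hy := (le_abs_self y).trans_lt habs
  exact div_neg_of_neg_of_pos (by rw [sub_neg, div_lt_one hs]; exact hy) (by positivity)

lemma continuous_barrier (ha : 0 < a) : Continuous (barrier a) :=
  continuous_iff_continuousAt.2 fun y ↦ (hasDerivAt_barrier ha y).continuousAt

lemma strictAnti_barrier (ha : 0 < a) : StrictAnti (barrier a) :=
  strictAnti_of_deriv_neg fun y ↦ (hasDerivAt_barrier ha y).deriv ▸ barrier_deriv_neg ha y

lemma barrier_le_one (ha : 0 < a) {y : ℝ} (hy : 0 ≤ y) : barrier a y ≤ 1 :=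
  barrier_zero ha ▸ (strictAnti_barrier ha).antitone hy

lemma num_eq_neg_mul_sub_barrier (ha : 0 < a) (x y : ℝ) :
    num a x y = -((x - barrier a y) * (a * (x + barrier a y) + y)) := by
  have h := num_barrier ha y
  rw [num] at h ⊢
  linear_combination h

lemma num_nonpos (ha : 0 < a) {x y : ℝ} (hy : 0 ≤ y) (hx : barrier a y ≤ x) : num a x y ≤ 0 := by
  have := barrier_pos ha y
  rw [num_eq_neg_mul_sub_barrier ha]
  exact neg_nonpos.2 (mul_nonneg (by linarith) (by nlinarith))

lemma num_neg (ha : 0 < a) {x y : ℝ} (hy : 0 ≤ y) (hx : barrier a y < x) : num a x y < 0 := by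
  have := barrier_pos ha y
  rw [num_eq_neg_mul_sub_barrier ha]
  exact neg_neg_of_pos (mul_pos (by linarith) (by nlinarith))

lemma den_eq_neg_mul_num_add (a b c x y : ℝ) :
    den b c x y = -(c * num a x y) + (a * c - b) * (1 - x ^ 2) := by
  rw [den, num]; ring

lemma den_pos (ha : 0 < a) (hb : 0 < b) (hc : 0 < c) (hbac : b < a * c) {x y : ℝ} (hy : 0 ≤ y)
    (hx : barrier a y ≤ x) (hxy : x ≠ 1 ∨ 0 < y) : 0 < den b c x y := by
  have hx0 := (barrier_pos ha y).trans_le hx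
  rcases lt_trichotomy x 1 with hx1 | rfl | hx1
  · rw [den_eq_neg_mul_num_add a]
    have := mul_pos (sub_pos.2 hbac) (show 0 < 1 - x ^ 2 by nlinarith)
    nlinarith [mul_nonneg hc.le (neg_nonneg.2 (num_nonpos ha hy hx))]
  · have hy : 0 < y := hxy.resolve_left (not_not.2 rfl)
    rw [den]
    nlinarith
  · rw [den]
    have := mul_pos hb (show 0 < x ^ 2 - 1 by nlinarith)
    nlinarith [mul_nonneg (mul_nonneg hc.le hx0.le) hy]

noncomputable def fieldBound (a b c : ℝ) : ℝ := max (a / b) (1 / c)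

lemma fieldBound_pos (hc : 0 < c) : 0 < fieldBound a b c :=
  lt_max_of_lt_right (one_div_pos.2 hc)

lemma field_nonpos (ha : 0 < a) {x y : ℝ} (hy : 0 ≤ y) (hx : barrier a y ≤ x)
    (hD : 0 < den b c x y) : field a b c x y ≤ 0 :=
  div_nonpos_of_nonpos_of_nonneg (num_nonpos ha hy hx) hD.le

lemma field_neg (ha : 0 < a) (hb : 0 < b) (hc : 0 < c) (hbac : b < a * c) {x y : ℝ}
    (hy : 0 < y) (hx : barrier a y < x) : field a b c x y < 0 :=
  div_neg_of_neg_of_pos (num_neg ha hy.le hx) (den_pos ha hb hc hbac hy.le hx.le (.inr hy))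

lemma field_barrier (ha : 0 < a) (y : ℝ) : field a b c (barrier a y) y = 0 := by
  rw [field, num_barrier ha, zero_div]

lemma neg_fieldBound_le_field (ha : 0 < a) (hb : 0 < b) (hc : 0 < c) (hbac : b < a * c)
    {x y : ℝ} (hy : 0 ≤ y) (hx : barrier a y ≤ x) (hD : 0 < den b c x y) :
    -fieldBound a b c ≤ field a b c x y := by
  have hN := num_nonpos ha hy hx
  have hMb : a ≤ fieldBound a b c * b := (div_le_iff₀ hb).1 (le_max_left _ _)
  have hMc : 1 ≤ fieldBound a b c * c := (div_le_iff₀ hc).1 (le_max_right _ _)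
  have hx0 := (barrier_pos ha y).trans_le hx
  rw [field, le_div_iff₀ hD, neg_mul, neg_le_iff_add_nonneg']
  rcases le_or_gt x 1 with hx1 | hx1
  · have key : fieldBound a b c * den b c x y + num a x y =
        (fieldBound a b c * c - 1) * -num a x y +
          fieldBound a b c * ((a * c - b) * (1 - x ^ 2)) := by
      rw [den_eq_neg_mul_num_add a]; ring
    rw [key]
    exact add_nonneg (mul_nonneg (sub_nonneg.2 hMc) (neg_nonneg.2 hN))
      (mul_nonneg (fieldBound_pos hc).le (mul_nonneg (sub_nonneg.2 hbac.le) (by nlinarith)))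
  · have key : fieldBound a b c * den b c x y + num a x y =
        (fieldBound a b c * b - a) * (x ^ 2 - 1) + (fieldBound a b c * c - 1) * (x * y) := by
      rw [num, den]; ring
    rw [key]
    exact add_nonneg (mul_nonneg (sub_nonneg.2 hMb) (by nlinarith))
      (mul_nonneg (sub_nonneg.2 hMc) (mul_nonneg hx0.le hy))

noncomputable def lowerFence (a b c ε t : ℝ) : ℝ := max (barrier a t) (1 + ε - fieldBound a b c * t)

noncomputable def clamp (a b c ε t x : ℝ) : ℝ := max (lowerFence a b c ε t) (min x (1 + ε))

noncomputable def clampedField (a b c ε t x : ℝ) : ℝ := field a b c (clamp a b c ε t x) t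

variable {ε : ℝ}

lemma continuous_lowerFence (ha : 0 < a) : Continuous (lowerFence a b c ε) :=
  (continuous_barrier ha).max (by fun_prop)

lemma lowerFence_le (ha : 0 < a) (hc : 0 < c) (hε : 0 ≤ ε) {t : ℝ} (ht : 0 ≤ t) :
    lowerFence a b c ε t ≤ 1 + ε :=
  max_le (by linarith [barrier_le_one ha ht])
    (by nlinarith [fieldBound_pos (a := a) (b := b) hc])

lemma clamp_mem (ha : 0 < a) (hc : 0 < c) (hε : 0 ≤ ε) {t : ℝ} (ht : 0 ≤ t) (x : ℝ) :
    clamp a b c ε t x ∈ Icc (lowerFence a b c ε t) (1 + ε) :=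
  ⟨le_max_left _ _, max_le (lowerFence_le ha hc hε ht) (min_le_right _ _)⟩

lemma clamp_of_mem {t x : ℝ} (hx : x ∈ Icc (lowerFence a b c ε t) (1 + ε)) :
    clamp a b c ε t x = x := by
  rw [clamp, min_eq_left hx.2, max_eq_right hx.1]

lemma lipschitzWith_clamp (t : ℝ) : LipschitzWith 1 (clamp a b c ε t) :=
  (LipschitzWith.id.min_const _).const_max _

lemma den_pos_of_mem_fence (ha : 0 < a) (hb : 0 < b) (hc : 0 < c) (hbac : b < a * c)
    (hε : 0 < ε) {t z : ℝ} (ht : 0 ≤ t) (hz : z ∈ Icc (lowerFence a b c ε t) (1 + ε)) :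
    0 < den b c z t := by
  refine den_pos ha hb hc hbac ht ((le_max_left _ _).trans hz.1) ?_
  rcases ht.eq_or_lt with rfl | ht
  · -- at `t = 0` the fence is `{1 + ε}`, which avoids the zero `(1, 0)` of `den`
    refine .inl (ne_of_gt ?_)
    have := (le_max_right _ _).trans hz.1
    linarith
  · exact .inr ht

lemma barrier_le_of_mem_fence {t z : ℝ} (hz : z ∈ Icc (lowerFence a b c ε t) (1 + ε)) :
    barrier a t ≤ z :=
  (le_max_left _ _).trans hz.1

lemma clampedField_nonpos (ha : 0 < a) (hb : 0 < b) (hc : 0 < c) (hbac : b < a * c)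
    (hε : 0 < ε) {t : ℝ} (ht : 0 ≤ t) (x : ℝ) : clampedField a b c ε t x ≤ 0 :=
  have hz := clamp_mem (b := b) ha hc hε.le ht x
  field_nonpos ha ht (barrier_le_of_mem_fence hz) (den_pos_of_mem_fence ha hb hc hbac hε ht hz)

lemma neg_fieldBound_le_clampedField (ha : 0 < a) (hb : 0 < b) (hc : 0 < c) (hbac : b < a * c)
    (hε : 0 < ε) {t : ℝ} (ht : 0 ≤ t) (x : ℝ) : -fieldBound a b c ≤ clampedField a b c ε t x :=
  have hz := clamp_mem (b := b) ha hc hε.le ht x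
  neg_fieldBound_le_field ha hb hc hbac ht (barrier_le_of_mem_fence hz)
    (den_pos_of_mem_fence ha hb hc hbac hε ht hz)

lemma norm_clampedField_le (ha : 0 < a) (hb : 0 < b) (hc : 0 < c) (hbac : b < a * c)
    (hε : 0 < ε) {t : ℝ} (ht : 0 ≤ t) (x : ℝ) : ‖clampedField a b c ε t x‖ ≤ fieldBound a b c :=
  abs_le.2 ⟨neg_fieldBound_le_clampedField ha hb hc hbac hε ht x,
    (clampedField_nonpos ha hb hc hbac hε ht x).trans (fieldBound_pos hc).le⟩

lemma continuousOn_clampedField (ha : 0 < a) (hb : 0 < b) (hc : 0 < c) (hbac : b < a * c)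
    (hε : 0 < ε) (x : ℝ) : ContinuousOn (clampedField a b c ε · x) (Ici 0) := by
  have hclamp : Continuous (clamp a b c ε · x) :=
    (continuous_lowerFence ha).max continuous_const
  refine ContinuousOn.div (by unfold num; fun_prop) (by unfold den; fun_prop) fun t ht ↦ ?_
  exact (den_pos_of_mem_fence ha hb hc hbac hε ht (clamp_mem ha hc hε.le ht x)).ne'

noncomputable def fieldDeriv (a b c x y : ℝ) : ℝ :=
  ((-(2 * a * x) - y) * den b c x y - num a x y * (2 * b * x + c * y)) / den b c x y ^ 2

lemma hasDerivAt_field {x y : ℝ} (hD : den b c x y ≠ 0) :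
    HasDerivAt (field a b c · y) (fieldDeriv a b c x y) x := by
  have hN : HasDerivAt (num a · y) (-(2 * a * x) - y) x :=
    ((((hasDerivAt_pow 2 x).const_sub 1).const_mul a).sub
      ((hasDerivAt_id' x).mul_const y)).congr_deriv (by ring)
  have hD' : HasDerivAt (den b c · y) (2 * b * x + c * y) x :=
    ((((hasDerivAt_pow 2 x).const_sub 1).const_mul b).neg.add
      (((hasDerivAt_id' x).const_mul c).mul_const y)).congr_deriv (by ring)
  exact hN.div hD' hD

lemma exists_lipschitzWith_clampedField (ha : 0 < a) (hb : 0 < b) (hc : 0 < c)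
    (hbac : b < a * c) (hε : 0 < ε) (T : ℝ) :
    ∃ K, ∀ t ∈ Icc 0 T, LipschitzWith K (clampedField a b c ε t) := by
  set S : Set (ℝ × ℝ) := {p | p.1 ∈ Icc 0 T ∧ p.2 ∈ Icc (lowerFence a b c ε p.1) (1 + ε)}
  have hden : ∀ p ∈ S, den b c p.2 p.1 ≠ 0 := fun p hp ↦
    (den_pos_of_mem_fence ha hb hc hbac hε hp.1.1 hp.2).ne'
  have hS : IsCompact S := by
    refine (isCompact_Icc.prod (isCompact_Icc (a := 0) (b := 1 + ε))).of_isClosed_subset ?_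
      fun p hp ↦ ⟨hp.1, (barrier_pos ha p.1).le.trans (barrier_le_of_mem_fence hp.2), hp.2.2⟩
    have := continuous_lowerFence (b := b) (c := c) (ε := ε) ha
    exact ((isClosed_le continuous_const continuous_fst).inter
      (isClosed_le continuous_fst continuous_const)).inter
      ((isClosed_le (this.comp continuous_fst) continuous_snd).inter
      (isClosed_le continuous_snd continuous_const))
  obtain ⟨K, hK⟩ := hS.exists_bound_of_continuousOn
    (f := fun p ↦ fieldDeriv a b c p.2 p.1) (ContinuousOn.div (by unfold num den; fun_prop) (by unfold den; fun_prop)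
      fun p hp ↦ pow_ne_zero 2 (hden p hp))
  refine ⟨K.toNNReal, fun t ht ↦ ?_⟩
  have hfield : LipschitzOnWith K.toNNReal (field a b c · t)
      (Icc (lowerFence a b c ε t) (1 + ε)) :=
    (convex_Icc _ _).lipschitzOnWith_of_nnnorm_hasDerivWithin_le
      (fun z hz ↦ (hasDerivAt_field (hden (t, z) ⟨ht, hz⟩)).hasDerivWithinAt)
      fun z hz ↦ by simpa [← NNReal.coe_le_coe] using (hK (t, z) ⟨ht, hz⟩).trans (le_max_left K 0)
  rw [← lipschitzOnWith_univ, ← mul_one K.toNNReal]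
  exact hfield.comp (lipschitzWith_clamp t).lipschitzOnWith fun x _ ↦ clamp_mem ha hc hε.le ht.1 x

section Solution

variable {α : ℝ → ℝ}

lemma solution_mem_fence (ha : 0 < a) (hb : 0 < b) (hc : 0 < c) (hbac : b < a * c) (hε : 0 < ε)
    (hα0 : α 0 = 1 + ε)
    (hα : ∀ t ≥ 0, HasDerivWithinAt α (clampedField a b c ε t (α t)) (Ici 0) t)
    {t : ℝ} (ht : 0 ≤ t) : α t ∈ Icc (lowerFence a b c ε t) (1 + ε) := by
  have hupper : ∀ t ≥ 0, α t ≤ 1 + ε := fun t ht ↦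
    image_le_of_deriv_right_le_deriv_boundary_Ici hα (fun _ _ ↦ hasDerivWithinAt_const _ _ _) hα0.le
      (fun s hs ↦ clampedField_nonpos ha hb hc hbac hε hs _) ht
  have hline : ∀ t ≥ 0, 1 + ε - fieldBound a b c * t ≤ α t := fun t ht ↦
    image_le_of_deriv_right_le_deriv_boundary_Ici (f' := fun _ ↦ -fieldBound a b c)
      (fun s _ ↦ (((hasDerivAt_id' s).const_mul _).const_sub (1 + ε)).hasDerivWithinAt.congr_deriv
        (by ring)) hα
      (by simp [hα0]) (fun s hs ↦ neg_fieldBound_le_clampedField ha hb hc hbac hε hs _) ht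
  have hbarrier : barrier a t ≤ α t := by
    refine image_le_of_deriv_right_lt_deriv_boundary_Ici
      (fun s _ ↦ (hasDerivAt_barrier ha s).hasDerivWithinAt) hα
      (by rw [barrier_zero ha, hα0]; linarith) (fun s hs hαs ↦ ?_) ht
    rw [clampedField, clamp_of_mem ⟨max_le hαs.le (hline s hs), hupper s hs⟩, ← hαs,
      field_barrier ha]
    exact barrier_deriv_neg ha s
  exact ⟨max_le hbarrier (hline t ht), hupper t ht⟩

lemma barrier_lt_solution (ha : 0 < a) (hle : ∀ t ≥ 0, barrier a t ≤ α t)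
    (hderiv : ∀ t > 0, HasDerivAt α (field a b c (α t) t) t) {t : ℝ} (ht : 0 < t) :
    barrier a t < α t := by
  refine (hle t ht.le).lt_of_ne fun heq ↦ (barrier_deriv_neg ha t).ne ?_
  have hmin : IsLocalMin (fun s ↦ α s - barrier a s) t :=
    Filter.mem_of_superset (Ici_mem_nhds ht) fun s hs ↦ by
      simpa [heq] using hle s hs
  have := hmin.hasDerivAt_eq_zero ((hderiv t ht).sub (hasDerivAt_barrier ha t))
  rw [← heq, field_barrier ha] at this
  linarith

end Solution

theorem exists_strictAntiOn_solution (ha : 0 < a) (hb : 0 < b) (hc : 0 < c) (hbac : b < a * c)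
    (hε : 0 < ε) :
    ∃ x : ℝ → ℝ, DifferentiableOn ℝ x (Ici 0) ∧ x 0 = 1 + ε ∧
      (∀ y > 0, HasDerivAt x (field a b c (x y) y) y) ∧ StrictAntiOn x (Ici 0) ∧
      ∀ y ≥ 0, barrier a y ≤ x y ∧ x y ≤ 1 + ε := by
  obtain ⟨x, hx0, hx⟩ := exists_forall_hasDerivWithinAt_Ici_of_norm_le
    (continuousOn_clampedField ha hb hc hbac hε)
    (fun t ht x ↦ (norm_clampedField_le ha hb hc hbac hε ht x).trans (le_coe_toNNReal _))
    (exists_lipschitzWith_clampedField ha hb hc hbac hε) (1 + ε)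
  have hmem y (hy : 0 ≤ y) := solution_mem_fence ha hb hc hbac hε hx0 hx hy
  have hderiv y (hy : 0 ≤ y) : HasDerivWithinAt x (field a b c (x y) y) (Ici 0) y := by
    simpa only [clampedField, clamp_of_mem (hmem y hy)] using hx y hy
  have hderivAt y (hy : 0 < y) : HasDerivAt x (field a b c (x y) y) y :=
    (hderiv y hy.le).hasDerivAt (Ici_mem_nhds hy)
  have hbarrier y (hy : 0 ≤ y) : barrier a y ≤ x y := barrier_le_of_mem_fence (hmem y hy)
  refine ⟨x, fun y hy ↦ (hderiv y hy).differentiableWithinAt, hx0, hderivAt, ?_,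
    fun y hy ↦ ⟨hbarrier y hy, (hmem y hy).2⟩⟩
  refine strictAntiOn_of_deriv_neg (convex_Ici 0) (fun y hy ↦ (hderiv y hy).continuousWithinAt)
    fun y hy ↦ ?_
  rw [interior_Ici] at hy
  rw [(hderivAt y hy).deriv]
  exact field_neg ha hb hc hbac hy (barrier_lt_solution ha hbarrier hderivAt hy)

lemma einsteinF_eq_field (m ρ x y : ℝ) :
    einsteinF m ρ x y =
      field ((m - 1) * (1 - m * ρ)) (m * (m - 1) * (1 - (m + 1) * ρ)) (1 + m - 4 * m * ρ) x y :=
  rfl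

lemma einsteinH_eq_barrier (m ρ y : ℝ) : einsteinH m ρ y = barrier ((m - 1) * (1 - m * ρ)) y := by
  simp only [einsteinH, barrier, mul_pow, mul_assoc]

lemma coefficients_pos_and_lt {m ρ : ℝ} (hm : 1 < m) (hρ : 2 * m * ρ < 1) :
    0 < (m - 1) * (1 - m * ρ) ∧ 0 < m * (m - 1) * (1 - (m + 1) * ρ) ∧ 0 < 1 + m - 4 * m * ρ ∧
      m * (m - 1) * (1 - (m + 1) * ρ) < (m - 1) * (1 - m * ρ) * (1 + m - 4 * m * ρ) := by
  have hmρ : (m + 1) * ρ < 1 := by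
    rcases le_or_gt ρ 0 with h | h <;> nlinarith
  refine ⟨mul_pos (by linarith) (by linarith), mul_pos (mul_pos (by linarith) (by linarith))
    (by linarith), by linarith, ?_⟩
  have : 0 < (m - 1) * (1 - 2 * m * ρ) ^ 2 := mul_pos (by linarith) (pow_pos (by linarith) 2)
  linear_combination this

end EinsteinSoliton

/-- For every `ε ∈ (0,1)` there is a differentiable solution `x` of `x' = F(x, ·)` on `[0, ∞)`
with `x 0 = 1 + ε`, strictly decreasing, trapped between `h` and `1 + ε`. -/
theorem exists_solution_above (n : ℕ) (hn : 3 ≤ n) (m ρ : ℝ) (hm : m = (n : ℝ) - 1)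
    (hρ : ρ < 1 / (2 * m)) (ε : ℝ) (hε : ε ∈ Set.Ioo (0 : ℝ) 1) :
    ∃ x : ℝ → ℝ, DifferentiableOn ℝ x (Set.Ici 0) ∧ x 0 = 1 + ε ∧
      (∀ y > (0 : ℝ), HasDerivAt x (einsteinF m ρ (x y) y) y) ∧
      StrictAntiOn x (Set.Ici 0) ∧
      (∀ y ≥ (0 : ℝ), einsteinH m ρ y ≤ x y ∧ x y ≤ 1 + ε) := by
  have hm1 : 1 < m := by
    have : (3 : ℝ) ≤ n := by exact_mod_cast hn
    linarith
  have hmρ : 2 * m * ρ < 1 := by rwa [lt_div_iff₀' (by linarith)] at hρ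
  obtain ⟨ha, hb, hc, hbac⟩ := EinsteinSoliton.coefficients_pos_and_lt hm1 hmρ
  obtain ⟨x, hdiff, hx0, hderiv, hanti, hbounds⟩ :=
    EinsteinSoliton.exists_strictAntiOn_solution ha hb hc hbac hε.1
  exact ⟨x, hdiff, hx0, by simpa only [EinsteinSoliton.einsteinF_eq_field] using hderiv, hanti,
    by simpa only [EinsteinSoliton.einsteinH_eq_barrier] using hbounds⟩
end

section
/- Suppose x₁, x₂ : [0, ∞) → ℝ are differentiable, satisfy xᵢ′(y) = F(xᵢ(y), y) for all y > 0, satisfy h(y) ≤ xᵢ(y) for all y ≥ 0 (i = 1, 2), and 1 < x₁(0) < x₂(0). Then x₁(y) < x₂(y) for every y ≥ 0. -/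
/-!
Above the barrier `h` the denominator of `F` is positive, so `F` is `C¹` there and solutions of
`x' = F(x, y)` are locally unique, backwards in `y` as well as forwards. If `x₁ < x₂` failed
somewhere, then at the first `y₀ > 0` with `x₁ y₀ = x₂ y₀` local uniqueness would force
`x₁ = x₂` just before `y₀`, contradicting `x₁ < x₂` on `[0, y₀)`.
-/

open Set Filter Topology Metric

theorem forall_lt_of_frequently_eq_nhdsLT {f g : ℝ → ℝ} {a : ℝ}
    (hf : ContinuousOn f (Ici a)) (hg : ContinuousOn g (Ici a)) (ha : f a < g a)
    (htouch : ∀ t > a, f t = g t → ∃ᶠ s in 𝓝[<] t, f s = g s) :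
    ∀ t ≥ a, f t < g t := by
  intro b hb
  by_contra! hgf_b
  have hS : IsCompact {t ∈ Icc a b | g t ≤ f t} :=
    isCompact_Icc.of_isClosed_subset
      (isClosed_Icc.isClosed_le (hg.mono Icc_subset_Ici_self) (hf.mono Icc_subset_Ici_self))
      (sep_subset _ _)
  obtain ⟨t₀, ⟨⟨hat₀, ht₀b⟩, hgf⟩, hmin⟩ := hS.exists_isLeast ⟨b, ⟨⟨hb, le_rfl⟩, hgf_b⟩⟩
  have hlt : ∀ s ∈ Ico a t₀, f s < g s := fun s ⟨has, hst₀⟩ => by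
    by_contra! h
    exact (hmin ⟨⟨has, hst₀.le.trans ht₀b⟩, h⟩).not_gt hst₀
  have hat₀' : a < t₀ := hat₀.lt_of_ne (by rintro rfl; linarith)
  have heq : f t₀ = g t₀ := by
    obtain ⟨c, ⟨hac, hct₀⟩, hc⟩ := intermediate_value_Icc' hat₀
      ((hg.sub hf).mono Icc_subset_Ici_self) ⟨sub_nonpos.2 hgf, (sub_pos.2 ha).le⟩
    have hfc : f c = g c := (sub_eq_zero.1 hc).symm
    obtain rfl : c = t₀ :=
      hct₀.antisymm (hmin ⟨⟨hac, hct₀.trans ht₀b⟩, hfc.ge⟩)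
    exact hfc
  obtain ⟨s, hfs, hs⟩ := ((htouch t₀ hat₀' heq).and_eventually (Ioo_mem_nhdsLT hat₀')).exists
  exact (hlt s (Ioo_subset_Ico_self hs)).ne hfs

theorem eventuallyEq_of_contDiffAt_of_hasDerivAt {E : Type*} [NormedAddCommGroup E]
    [NormedSpace ℝ E] {v : ℝ → E → E} {f g : ℝ → E} {t₀ : ℝ}
    (hv : ContDiffAt ℝ 1 (fun p : ℝ × E => v p.1 p.2) (t₀, f t₀))
    (hf : ∀ᶠ t in 𝓝 t₀, HasDerivAt f (v t (f t)) t)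
    (hg : ∀ᶠ t in 𝓝 t₀, HasDerivAt g (v t (g t)) t) (heq : f t₀ = g t₀) :
    f =ᶠ[𝓝 t₀] g := by
  obtain ⟨K, U, hU, hlip⟩ := hv.exists_lipschitzOnWith
  obtain ⟨ε, hε, hball⟩ := Metric.mem_nhds_iff.1 hU
  have hslice : ∀ t ∈ ball t₀ ε, LipschitzOnWith K (v t) (ball (f t₀) ε) := fun t ht => by
    simpa [Function.comp_def] using
      (hlip.mono hball).comp (LipschitzWith.prodMk_left t).lipschitzOnWith
        fun x hx => (ball_prod_same t₀ (f t₀) ε).subset ⟨ht, hx⟩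
  have hmem {φ : ℝ → E} (hφ : ∀ᶠ t in 𝓝 t₀, HasDerivAt φ (v t (φ t)) t) (h₀ : φ t₀ = f t₀) :
      ∀ᶠ t in 𝓝 t₀, HasDerivAt φ (v t (φ t)) t ∧ φ t ∈ ball (f t₀) ε :=
    hφ.and (hφ.self_of_nhds.continuousAt.preimage_mem_nhds (h₀ ▸ ball_mem_nhds _ hε))
  exact ODE_solution_unique_of_eventually (eventually_of_mem (ball_mem_nhds t₀ hε) hslice)
    (hmem hf rfl) (hmem hg heq.symm) heq

def einsteinDenom (m ρ x y : ℝ) : ℝ :=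
  -(m * (m - 1) * (1 - (m + 1) * ρ) * (1 - x ^ 2)) + (1 + m - 4 * m * ρ) * x * y

section Barrier

variable {m ρ x y : ℝ}

lemma einsteinH_pos (ha : 0 < (m - 1) * (1 - m * ρ)) (y : ℝ) : 0 < einsteinH m ρ y := by
  have hs := Real.sq_sqrt (by positivity : 0 ≤ y ^ 2 + 4 * (m - 1) ^ 2 * (1 - m * ρ) ^ 2)
  have hs₀ := Real.sqrt_nonneg (y ^ 2 + 4 * (m - 1) ^ 2 * (1 - m * ρ) ^ 2)
  refine div_pos ?_ (by linarith)
  nlinarith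

lemma mul_one_sub_sq_le_of_einsteinH_le (ha : 0 < (m - 1) * (1 - m * ρ))
    (hx : einsteinH m ρ y ≤ x) : (m - 1) * (1 - m * ρ) * (1 - x ^ 2) ≤ x * y := by
  have hs := Real.sq_sqrt (by positivity : 0 ≤ y ^ 2 + 4 * (m - 1) ^ 2 * (1 - m * ρ) ^ 2)
  have hs₀ := Real.sqrt_nonneg (y ^ 2 + 4 * (m - 1) ^ 2 * (1 - m * ρ) ^ 2)
  rw [einsteinH, div_le_iff₀ (by linarith)] at hx
  nlinarith [mul_self_le_mul_self hs₀ (by linarith : _ ≤ 2 * ((m - 1) * (1 - m * ρ)) * x + y)]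

lemma einsteinDenom_pos (hm : 1 < m) (hρ : 2 * m * ρ < 1) (hy : 0 < y)
    (hx : einsteinH m ρ y ≤ x) : 0 < einsteinDenom m ρ x y := by
  have ha : 0 < (m - 1) * (1 - m * ρ) := by nlinarith
  have hxy := mul_one_sub_sq_le_of_einsteinH_le ha hx
  have hx₀ := (einsteinH_pos ha y).trans_le hx
  have hc : 0 < 1 + m - 4 * m * ρ := by linarith
  unfold einsteinDenom
  rcases lt_or_ge x 1 with hx₁ | hx₁
  · -- the barrier inequality bounds the denominator below by `(m - 1)(1 - 2mρ)²(1 - x²)`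
    have hsq : 0 < (m - 1) * ((1 - 2 * m * ρ) ^ 2 * (1 - x ^ 2)) := by
      have : 0 < 1 - x ^ 2 := by nlinarith
      positivity
    nlinarith [mul_le_mul_of_nonneg_left hxy hc.le]
  · have hρ' : 0 < 1 - (m + 1) * ρ := by nlinarith
    have : 0 ≤ m * (m - 1) * (1 - (m + 1) * ρ) * (x ^ 2 - 1) := by
      have : 0 ≤ x ^ 2 - 1 := by nlinarith
      have : 0 < m * (m - 1) := by nlinarith
      positivity
    nlinarith [mul_pos (mul_pos hc hx₀) hy]

lemma contDiffAt_einsteinF (h : einsteinDenom m ρ x y ≠ 0) :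
    ContDiffAt ℝ 1 (fun p : ℝ × ℝ => einsteinF m ρ p.2 p.1) (y, x) := by
  unfold einsteinF
  exact ContDiffAt.div (by fun_prop) (by fun_prop) h

end Barrier

theorem solutions_ordered_general (n : ℕ) (hn : 3 ≤ n) (m ρ : ℝ) (hm : m = (n : ℝ) - 1)
    (hρ : ρ < 1 / (2 * m)) (x₁ x₂ : ℝ → ℝ)
    (hd₁ : DifferentiableOn ℝ x₁ (Set.Ici 0)) (hd₂ : DifferentiableOn ℝ x₂ (Set.Ici 0))
    (hode₁ : ∀ y > (0 : ℝ), HasDerivAt x₁ (einsteinF m ρ (x₁ y) y) y)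
    (hode₂ : ∀ y > (0 : ℝ), HasDerivAt x₂ (einsteinF m ρ (x₂ y) y) y)
    (hbar₁ : ∀ y ≥ (0 : ℝ), einsteinH m ρ y ≤ x₁ y)
    (h12 : x₁ 0 < x₂ 0) :
    ∀ y ≥ (0 : ℝ), x₁ y < x₂ y := by
  have hm₁ : 1 < m := by
    have : (3 : ℝ) ≤ n := by exact_mod_cast hn
    linarith
  have hρ' : 2 * m * ρ < 1 := by
    rwa [lt_div_iff₀ (by linarith), mul_comm] at hρ
  refine forall_lt_of_frequently_eq_nhdsLT hd₁.continuousOn hd₂.continuousOn h12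
    fun y hy heq => ?_
  have hden := einsteinDenom_pos hm₁ hρ' hy (hbar₁ y hy.le)
  have hloc : x₁ =ᶠ[𝓝 y] x₂ :=
    eventuallyEq_of_contDiffAt_of_hasDerivAt (v := fun y x => einsteinF m ρ x y)
      (contDiffAt_einsteinF hden.ne') ((eventually_gt_nhds hy).mono hode₁)
      ((eventually_gt_nhds hy).mono hode₂) heq
  exact (hloc.filter_mono nhdsWithin_le_nhds).frequently

/-- Comparison of solutions of `x' = F(x, ·)` staying above the barrier `h`: solutions
ordered at `y = 0` (both above `1`) stay ordered for all `y ≥ 0`. -/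
theorem solutions_ordered (n : ℕ) (hn : 3 ≤ n) (m ρ : ℝ) (hm : m = (n : ℝ) - 1)
    (hρ : ρ < 1 / (2 * m)) (x₁ x₂ : ℝ → ℝ)
    (hd₁ : DifferentiableOn ℝ x₁ (Set.Ici 0)) (hd₂ : DifferentiableOn ℝ x₂ (Set.Ici 0))
    (hode₁ : ∀ y > (0 : ℝ), HasDerivAt x₁ (einsteinF m ρ (x₁ y) y) y)
    (hode₂ : ∀ y > (0 : ℝ), HasDerivAt x₂ (einsteinF m ρ (x₂ y) y) y)
    (hbar₁ : ∀ y ≥ (0 : ℝ), einsteinH m ρ y ≤ x₁ y)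
    (hbar₂ : ∀ y ≥ (0 : ℝ), einsteinH m ρ y ≤ x₂ y)
    (h0 : 1 < x₁ 0) (h12 : x₁ 0 < x₂ 0) :
    ∀ y ≥ (0 : ℝ), x₁ y < x₂ y :=
  solutions_ordered_general n hn m ρ hm hρ x₁ x₂ hd₁ hd₂ hode₁ hode₂ hbar₁ h12
end

section
/- There exists a differentiable function x̄ : (0, ∞) → ℝ such that x̄′(y) = F(x̄(y), y) for all y > 0, h(y) ≤ x̄(y) ≤ 1 for all y > 0, and x̄(y) → 1 as y → 0⁺. -/
/-!
In the region `h(y) ≤ x ≤ 1`, `y > 0`, both boundaries are fences in the sense of Hubbard and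
West: on `x = 1` the field points down (`F(1, y) = -1/(1 + m - 4mρ) < 0`), and on the decreasing
curve `x = h(y)` it is horizontal (`F(h, y) = 0`), so it can only be crossed upwards. Hence the
solution `x_s` entering at the corner `(s, 1)` stays in the region, and solutions of this Lipschitz
equation cannot cross; as `x_s(s) = 1 ≥ x_{s'}(s)` for `s' < s`, the values `x_s(y)` increase with
`s`. Their limit as `s → 0⁺` is again trapped between `h` and `1`, hence tends to `1` at `0`, and it
solves the equation because solutions depend continuously on their initial value (Grönwall).
-/
open Set Filter Topology
open scoped NNReal

/-- A funnel for `x' = F(x, y)` on `y > 0`, in the sense of Hubbard and West: the lower fence `h`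
and the upper fence `1`, with `F` of class `C¹` between them. -/
structure IsFunnel (F : ℝ → ℝ → ℝ) (h : ℝ → ℝ) : Prop where
  contDiffAt : ∀ y > 0, ∀ x ∈ Icc (h y) 1, ContDiffAt ℝ 1 (fun p : ℝ × ℝ => F p.2 p.1) (y, x)
  le_one : ∀ y > 0, h y ≤ 1
  lower_fence : ∀ y > 0, ∃ h' : ℝ, HasDerivAt h h' y ∧ h' < F (h y) y
  upper_fence : ∀ y > 0, F 1 y < 0

/-- `F` with `x` clamped to `[h y, 1]`: Lipschitz in `x` on every slab `c ≤ y ≤ d` with `c > 0`,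
and equal to `F` inside the funnel. -/
def clampField (F : ℝ → ℝ → ℝ) (h : ℝ → ℝ) (y x : ℝ) : ℝ := F (max (h y) (min x 1)) y

/-- The interval `[s, s⁻¹]` exhausts `(0, ∞)` as `s → 0⁺`. -/
noncomputable def funnelCurve (F : ℝ → ℝ → ℝ) (h : ℝ → ℝ) (s : ℝ) : ℝ → ℝ :=
  Classical.epsilon fun f => f s = 1 ∧ IsIntegralCurveOn f (clampField F h) (Icc s s⁻¹)

noncomputable def funnelLimit (F : ℝ → ℝ → ℝ) (h : ℝ → ℝ) (y : ℝ) : ℝ :=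
  limUnder (𝓝[>] 0) fun s => funnelCurve F h s y

theorem clampField_of_mem {F : ℝ → ℝ → ℝ} {h : ℝ → ℝ} {y x : ℝ} (hx : x ∈ Icc (h y) 1) :
    clampField F h y x = F x y := by
  rw [clampField, min_eq_left hx.2, max_eq_right hx.1]

theorem IsIntegralCurveOn.hasDerivWithinAt_Ici {E : Type*} [NormedAddCommGroup E]
    [NormedSpace ℝ E] {f : ℝ → E} {v : ℝ → E → E} {a b t : ℝ}
    (hf : IsIntegralCurveOn f v (Icc a b)) (ht : t ∈ Ico a b) :
    HasDerivWithinAt f (v t (f t)) (Ici t) t :=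
  (hf t (Ico_subset_Icc_self ht)).mono_of_mem_nhdsWithin (Icc_mem_nhdsGE_of_mem ht)

theorem mem_Icc_inv_of_mem_Ioo_min {s t : ℝ} (ht : 0 < t) (hs : s ∈ Ioo 0 (min t t⁻¹)) :
    t ∈ Icc s s⁻¹ :=
  ⟨(hs.2.trans_le (min_le_left _ _)).le,
    (le_inv_comm₀ hs.1 ht).1 (hs.2.trans_le (min_le_right _ _)).le⟩

namespace IsFunnel

variable {F : ℝ → ℝ → ℝ} {h : ℝ → ℝ} {c d : ℝ}

theorem continuousOn (hF : IsFunnel F h) : ContinuousOn h (Ioi 0) := fun y hy =>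
  let ⟨_, hd, _⟩ := hF.lower_fence y hy
  hd.continuousAt.continuousWithinAt

theorem clamp_mem (hF : IsFunnel F h) {y : ℝ} (hy : 0 < y) (x : ℝ) :
    max (h y) (min x 1) ∈ Icc (h y) 1 :=
  ⟨le_max_left _ _, max_le (hF.le_one y hy) (min_le_right _ _)⟩

theorem isCompact_slab (hF : IsFunnel F h) (hc : 0 < c) :
    IsCompact {p : ℝ × ℝ | p.1 ∈ Icc c d ∧ p.2 ∈ Icc (h p.1) 1} := by
  have hcont : ContinuousOn h (Icc c d) := hF.continuousOn.mono fun y hy => hc.trans_le hy.1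
  obtain ⟨b, hb⟩ := (isCompact_Icc.image_of_continuousOn hcont).bddBelow
  have hclosed : IsClosed ((Icc c d ×ˢ Icc b 1) ∩ (fun p : ℝ × ℝ => p.2 - h p.1) ⁻¹' Ici 0) :=
    ContinuousOn.preimage_isClosed_of_isClosed
      (continuousOn_snd.sub (hcont.comp continuousOn_fst fun _ hp => hp.1))
      (isClosed_Icc.prod isClosed_Icc) isClosed_Ici
  convert (isCompact_Icc.prod isCompact_Icc).of_isClosed_subset hclosed inter_subset_left using 1
  ext ⟨y, x⟩
  simp only [mem_ofPred_eq, mem_inter_iff, mem_prod, mem_preimage, mem_Icc, mem_Ici, sub_nonneg]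
  constructor
  · rintro ⟨hy, hhx, hx1⟩
    exact ⟨⟨hy, (hb (mem_image_of_mem h hy)).trans hhx, hx1⟩, hhx⟩
  · rintro ⟨⟨hy, -, hx1⟩, hhx⟩
    exact ⟨hy, hhx, hx1⟩

theorem exists_lipschitzWith_clampField (hF : IsFunnel F h) (hc : 0 < c) :
    ∃ K, ∀ y ∈ Icc c d, LipschitzWith K (clampField F h y) := by
  have hloc : LocallyLipschitzOn {p : ℝ × ℝ | p.1 ∈ Icc c d ∧ p.2 ∈ Icc (h p.1) 1}
      (fun p : ℝ × ℝ => F p.2 p.1) := by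
    rintro ⟨y, x⟩ ⟨hy, hx⟩
    obtain ⟨K, t, ht, hK⟩ := (hF.contDiffAt y (hc.trans_le hy.1) x hx).exists_lipschitzOnWith
    exact ⟨K, t, mem_nhdsWithin_of_mem_nhds ht, hK⟩
  obtain ⟨K, hK⟩ := hloc.exists_lipschitzOnWith_of_compact (hF.isCompact_slab hc)
  refine ⟨K, fun y hy => ?_⟩
  have hclamp : LipschitzWith 1 fun x => (y, max (h y) (min x 1)) := by
    simpa using (LipschitzWith.const y).prodMk ((LipschitzWith.id.min_const 1).const_max (h y))
  have := hK.comp (hclamp.lipschitzOnWith (s := univ))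
    fun x _ => ⟨hy, hF.clamp_mem (hc.trans_le hy.1) x⟩
  rw [mul_one] at this
  exact lipschitzOnWith_univ.1 this

theorem exists_norm_clampField_le (hF : IsFunnel F h) (hc : 0 < c) :
    ∃ L : ℝ≥0, ∀ y ∈ Icc c d, ∀ x, ‖clampField F h y x‖ ≤ L := by
  obtain ⟨L, hL⟩ := (hF.isCompact_slab hc).exists_bound_of_continuousOn
    (f := fun p : ℝ × ℝ => F p.2 p.1) fun p hp =>
      (hF.contDiffAt p.1 (hc.trans_le hp.1.1) p.2 hp.2).continuousAt.continuousWithinAt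
  exact ⟨L.toNNReal, fun y hy x =>
    (hL (y, _) ⟨hy, hF.clamp_mem (hc.trans_le hy.1) x⟩).trans (Real.le_coe_toNNReal L)⟩

theorem continuousOn_clampField (hF : IsFunnel F h) (x : ℝ) :
    ContinuousOn (fun y => clampField F h y x) (Ioi 0) := fun y hy =>
  (hF.contDiffAt y hy _ (hF.clamp_mem hy x)).continuousAt.comp_continuousWithinAt
    (f := fun y => (y, max (h y) (min x 1)))
    (continuousWithinAt_id.prodMk ((hF.continuousOn y hy).max continuousWithinAt_const))

theorem exists_isIntegralCurveOn (hF : IsFunnel F h) {y₀ : ℝ} (hy₀ : 0 < y₀) (Y x₀ : ℝ) :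
    ∃ f, f y₀ = x₀ ∧ IsIntegralCurveOn f (clampField F h) (Icc y₀ Y) := by
  rcases lt_or_ge Y y₀ with hY | hY
  · exact ⟨fun _ => x₀, rfl, by simp [IsIntegralCurveOn, Icc_eq_empty_of_lt hY]⟩
  obtain ⟨K, hK⟩ := hF.exists_lipschitzWith_clampField (d := Y) hy₀
  obtain ⟨L, hL⟩ := hF.exists_norm_clampField_le (d := Y) hy₀
  have hPL : IsPicardLindelof (clampField F h) (⟨y₀, left_mem_Icc.2 hY⟩ : Icc y₀ Y) x₀
      (L * (Y - y₀).toNNReal) 0 L K :=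
    { lipschitzOnWith := fun t ht => (hK t ht).lipschitzOnWith
      continuousOn := fun x _ => (hF.continuousOn_clampField x).mono fun t ht => hy₀.trans_le ht.1
      norm_le := fun t ht x _ => hL t ht x
      mul_max_le := by simp [sub_nonneg.2 hY] }
  exact hPL.exists_eq_forall_mem_Icc_hasDerivWithinAt₀

theorem mem_Icc_of_isIntegralCurveOn (hF : IsFunnel F h) {f : ℝ → ℝ} {y₀ Y : ℝ} (hy₀ : 0 < y₀)
    (hf : IsIntegralCurveOn f (clampField F h) (Icc y₀ Y)) (hf₀ : f y₀ ∈ Icc (h y₀) 1) :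
    ∀ t ∈ Icc y₀ Y, f t ∈ Icc (h t) 1 := by
  have hpos : ∀ t ∈ Ico y₀ Y, 0 < t := fun t ht => hy₀.trans_le ht.1
  choose! h' hh' hfence using hF.lower_fence
  have hlower : ∀ t ∈ Icc y₀ Y, h t ≤ f t :=
    image_le_of_deriv_right_lt_deriv_boundary'
      (hF.continuousOn.mono fun t ht => hy₀.trans_le ht.1)
      (fun t ht => (hh' t (hpos t ht)).hasDerivWithinAt) hf₀.1 hf.continuousOn
      (fun t ht => hf.hasDerivWithinAt_Ici ht) fun t ht hft => by
        rw [← hft, clampField_of_mem ⟨le_rfl, hF.le_one t (hpos t ht)⟩]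
        exact hfence t (hpos t ht)
  have hupper : ∀ t ∈ Icc y₀ Y, f t ≤ 1 :=
    image_le_of_deriv_right_lt_deriv_boundary' hf.continuousOn
      (fun t ht => hf.hasDerivWithinAt_Ici ht) hf₀.2 continuousOn_const
      (fun t _ => hasDerivWithinAt_const t _ 1) fun t ht hft => by
        rw [hft, clampField_of_mem ⟨hF.le_one t (hpos t ht), le_rfl⟩]
        exact hF.upper_fence t (hpos t ht)
  exact fun t ht => ⟨hlower t ht, hupper t ht⟩

theorem exists_dist_le_of_isIntegralCurveOn (hF : IsFunnel F h) (hc : 0 < c) :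
    ∃ K : ℝ≥0, ∀ f g : ℝ → ℝ, IsIntegralCurveOn f (clampField F h) (Icc c d) →
      IsIntegralCurveOn g (clampField F h) (Icc c d) →
      ∀ t ∈ Icc c d, dist (f t) (g t) ≤ dist (f c) (g c) * Real.exp (K * (t - c)) := by
  obtain ⟨K, hK⟩ := hF.exists_lipschitzWith_clampField (d := d) hc
  exact ⟨K, fun f g hf hg => dist_le_of_trajectories_ODE_of_mem (s := fun _ => univ)
    (fun t ht => (hK t (Ico_subset_Icc_self ht)).lipschitzOnWith) hf.continuousOn
    (fun t ht => hf.hasDerivWithinAt_Ici ht) (fun _ _ => trivial) hg.continuousOn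
    (fun t ht => hg.hasDerivWithinAt_Ici ht) (fun _ _ => trivial) le_rfl⟩

/-- Two solutions that crossed would meet first, and then coincide by uniqueness. -/
theorem le_of_isIntegralCurveOn (hF : IsFunnel F h) (hc : 0 < c) {f g : ℝ → ℝ}
    (hf : IsIntegralCurveOn f (clampField F h) (Icc c d))
    (hg : IsIntegralCurveOn g (clampField F h) (Icc c d)) (hfg : f c ≤ g c) :
    ∀ t ∈ Icc c d, f t ≤ g t := by
  intro t ht
  by_contra! hlt
  obtain ⟨s, hs, hfgs⟩ : ∃ s ∈ Icc c t, g s - f s = 0 :=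
    intermediate_value_Icc' (f := fun u => g u - f u) ht.1
      ((hg.continuousOn.sub hf.continuousOn).mono (Icc_subset_Icc_right ht.2))
      ⟨by linarith, by linarith⟩
  have hsub : Icc s d ⊆ Icc c d := Icc_subset_Icc_left hs.1
  obtain ⟨K, hK⟩ := hF.exists_dist_le_of_isIntegralCurveOn (d := d) (hc.trans_le hs.1)
  have := hK f g (hf.mono hsub) (hg.mono hsub) t ⟨hs.2, ht.2⟩
  rw [dist_eq_zero.2 (sub_eq_zero.1 hfgs).symm, zero_mul, dist_le_zero] at this
  exact hlt.ne this.symm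

theorem tendsto_of_isIntegralCurveOn (hF : IsFunnel F h) (hc : 0 < c) {ι : Type*}
    {l : Filter ι} {Φ : ι → ℝ → ℝ} {g : ℝ → ℝ}
    (hΦ : ∀ᶠ i in l, IsIntegralCurveOn (Φ i) (clampField F h) (Icc c d))
    (hg : IsIntegralCurveOn g (clampField F h) (Icc c d))
    (hlim : Tendsto (fun i => Φ i c) l (𝓝 (g c))) {t : ℝ} (ht : t ∈ Icc c d) :
    Tendsto (fun i => Φ i t) l (𝓝 (g t)) := by
  obtain ⟨K, hK⟩ := hF.exists_dist_le_of_isIntegralCurveOn (d := d) hc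
  rw [tendsto_iff_dist_tendsto_zero] at hlim ⊢
  refine squeeze_zero' (Eventually.of_forall fun _ => dist_nonneg)
    (hΦ.mono fun i hi => hK _ _ hi hg t ht) ?_
  simpa using hlim.mul_const (Real.exp (K * (t - c)))

theorem funnelCurve_spec (hF : IsFunnel F h) {s : ℝ} (hs : 0 < s) :
    funnelCurve F h s s = 1 ∧
      IsIntegralCurveOn (funnelCurve F h s) (clampField F h) (Icc s s⁻¹) :=
  Classical.epsilon_spec (hF.exists_isIntegralCurveOn hs s⁻¹ 1)

theorem funnelCurve_mem (hF : IsFunnel F h) {s t : ℝ} (hs : 0 < s) (ht : t ∈ Icc s s⁻¹) :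
    funnelCurve F h s t ∈ Icc (h t) 1 := by
  obtain ⟨h1, hcurve⟩ := hF.funnelCurve_spec hs
  refine hF.mem_Icc_of_isIntegralCurveOn hs hcurve ?_ t ht
  rw [h1]
  exact ⟨hF.le_one s hs, le_rfl⟩

theorem eventually_isIntegralCurveOn_funnelCurve (hF : IsFunnel F h) (hc : 0 < c) :
    ∀ᶠ s in 𝓝[>] 0, IsIntegralCurveOn (funnelCurve F h s) (clampField F h) (Icc c d) := by
  filter_upwards [Ioc_mem_nhdsGT hc, tendsto_inv_nhdsGT_zero.eventually_ge_atTop d]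
    with s hs hds
  exact (hF.funnelCurve_spec hs.1).2.mono (Icc_subset_Icc hs.2 hds)

theorem monotoneOn_funnelCurve (hF : IsFunnel F h) {t : ℝ} (ht : 0 < t) :
    MonotoneOn (fun s => funnelCurve F h s t) (Ioo 0 (min t t⁻¹)) := by
  intro α hα β hβ hαβ
  have htβ := mem_Icc_inv_of_mem_Ioo_min ht hβ
  have hsub : Icc β β⁻¹ ⊆ Icc α α⁻¹ := Icc_subset_Icc hαβ (inv_anti₀ hα.1 hαβ)
  refine hF.le_of_isIntegralCurveOn hβ.1 ((hF.funnelCurve_spec hα.1).2.mono hsub)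
    (hF.funnelCurve_spec hβ.1).2 ?_ t htβ
  rw [(hF.funnelCurve_spec hβ.1).1]
  exact (hF.funnelCurve_mem hα.1 (hsub ⟨le_rfl, htβ.1.trans htβ.2⟩)).2

theorem tendsto_funnelLimit (hF : IsFunnel F h) {t : ℝ} (ht : 0 < t) :
    Tendsto (fun s => funnelCurve F h s t) (𝓝[>] 0) (𝓝 (funnelLimit F h t)) := by
  have hpos : 0 < min t t⁻¹ := lt_min ht (inv_pos.2 ht)
  refine tendsto_nhds_limUnder ⟨_, (hF.monotoneOn_funnelCurve ht).tendsto_nhdsWithin_Ioo_right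
    (nonempty_Ioo.2 hpos) ⟨h t, ?_⟩⟩
  rintro _ ⟨s, hs, rfl⟩
  exact (hF.funnelCurve_mem hs.1 (mem_Icc_inv_of_mem_Ioo_min ht hs)).1

theorem funnelLimit_mem (hF : IsFunnel F h) {t : ℝ} (ht : 0 < t) :
    funnelLimit F h t ∈ Icc (h t) 1 := by
  refine isClosed_Icc.mem_of_tendsto (hF.tendsto_funnelLimit ht) ?_
  filter_upwards [Ioo_mem_nhdsGT (lt_min ht (inv_pos.2 ht))] with s hs
  exact hF.funnelCurve_mem hs.1 (mem_Icc_inv_of_mem_Ioo_min ht hs)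

/-- Near `y`, the limit coincides with the solution through `(y / 2, funnelLimit F h (y / 2))`,
by continuous dependence on the initial value. -/
theorem hasDerivAt_funnelLimit (hF : IsFunnel F h) {y : ℝ} (hy : 0 < y) :
    HasDerivAt (funnelLimit F h) (F (funnelLimit F h y) y) y := by
  have hc : 0 < y / 2 := half_pos hy
  have hy' : y ∈ Ioo (y / 2) (2 * y) := ⟨half_lt_self hy, by linarith⟩
  obtain ⟨g, hgc, hg⟩ := hF.exists_isIntegralCurveOn hc (2 * y) (funnelLimit F h (y / 2))
  have heq : EqOn (funnelLimit F h) g (Icc (y / 2) (2 * y)) := fun t ht =>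
    tendsto_nhds_unique (hF.tendsto_funnelLimit (hc.trans_le ht.1))
      (hF.tendsto_of_isIntegralCurveOn hc (hF.eventually_isIntegralCurveOn_funnelCurve hc) hg
        (hgc ▸ hF.tendsto_funnelLimit hc) ht)
  have hreg := hF.mem_Icc_of_isIntegralCurveOn hc hg (hgc ▸ hF.funnelLimit_mem hc) y
    (Ioo_subset_Icc_self hy')
  have hgy := (hg y (Ioo_subset_Icc_self hy')).hasDerivAt (Icc_mem_nhds hy'.1 hy'.2)
  rw [clampField_of_mem hreg, ← heq (Ioo_subset_Icc_self hy')] at hgy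
  exact hgy.congr_of_eventuallyEq (eventuallyEq_of_mem (Icc_mem_nhds hy'.1 hy'.2) heq)

theorem exists_solution (hF : IsFunnel F h) (hlim : Tendsto h (𝓝[>] 0) (𝓝 1)) :
    ∃ x : ℝ → ℝ, (∀ y > 0, HasDerivAt x (F (x y) y) y) ∧ (∀ y > 0, x y ∈ Icc (h y) 1) ∧
      Tendsto x (𝓝[>] 0) (𝓝 1) := by
  have hmem : ∀ᶠ y in 𝓝[>] 0, funnelLimit F h y ∈ Icc (h y) 1 :=
    eventually_mem_nhdsWithin.mono fun y hy => hF.funnelLimit_mem hy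
  exact ⟨funnelLimit F h, fun y hy => hF.hasDerivAt_funnelLimit hy,
    fun y hy => hF.funnelLimit_mem hy, tendsto_of_tendsto_of_tendsto_of_le_of_le' hlim
      tendsto_const_nhds (hmem.mono fun _ hy => hy.1) (hmem.mono fun _ hy => hy.2)⟩

end IsFunnel

section Einstein

variable {m ρ x y : ℝ}

theorem einstein_coeff_pos (hm : 1 < m) (hρ : 2 * m * ρ < 1) : 0 < (m - 1) * (1 - m * ρ) :=
  mul_pos (by linarith) (by nlinarith)

theorem einsteinH_eq (y : ℝ) :
    einsteinH m ρ y = (-y + Real.sqrt (y ^ 2 + 4 * ((m - 1) * (1 - m * ρ)) ^ 2)) /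
      (2 * ((m - 1) * (1 - m * ρ))) := by
  rw [einsteinH]; ring_nf

theorem einsteinH_spec (hA : 0 < (m - 1) * (1 - m * ρ)) (y : ℝ) :
    0 < einsteinH m ρ y ∧
      (m - 1) * (1 - m * ρ) * (1 - einsteinH m ρ y ^ 2) = einsteinH m ρ y * y := by
  rw [einsteinH_eq]
  set A := (m - 1) * (1 - m * ρ)
  set s := Real.sqrt (y ^ 2 + 4 * A ^ 2)
  have hs : s ^ 2 = y ^ 2 + 4 * A ^ 2 := Real.sq_sqrt (by positivity)
  have hys : y < s := by nlinarith [Real.sqrt_nonneg (y ^ 2 + 4 * A ^ 2)]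
  set h := (-y + s) / (2 * A)
  have hh : 2 * A * h = -y + s := by simp only [h]; field_simp
  have key : A * (A * (1 - h ^ 2) - h * y) = 0 := by
    rw [show s = 2 * A * h + y by linarith] at hs
    linear_combination (-1 / 4 : ℝ) * hs
  refine ⟨div_pos (by linarith) (by positivity), ?_⟩
  linarith [(mul_eq_zero.1 key).resolve_left hA.ne']

theorem einsteinH_le_one (hA : 0 < (m - 1) * (1 - m * ρ)) (hy : 0 ≤ y) :
    einsteinH m ρ y ≤ 1 := by
  obtain ⟨hpos, hquad⟩ := einsteinH_spec hA y
  have h1 : 0 ≤ 1 - einsteinH m ρ y ^ 2 := by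
    by_contra! hc
    nlinarith [mul_neg_of_pos_of_neg hA hc, mul_nonneg hpos.le hy]
  nlinarith

theorem einsteinF_einsteinH (hA : 0 < (m - 1) * (1 - m * ρ)) (y : ℝ) :
    einsteinF m ρ (einsteinH m ρ y) y = 0 := by
  rw [einsteinF, (einsteinH_spec hA y).2, sub_self, zero_div]

theorem exists_hasDerivAt_einsteinH (hA : 0 < (m - 1) * (1 - m * ρ)) (y : ℝ) :
    ∃ h' < 0, HasDerivAt (einsteinH m ρ) h' y := by
  set s := Real.sqrt (y ^ 2 + 4 * (m - 1) ^ 2 * (1 - m * ρ) ^ 2)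
  have hpos : 0 < y ^ 2 + 4 * (m - 1) ^ 2 * (1 - m * ρ) ^ 2 := by
    have : 0 < ((m - 1) * (1 - m * ρ)) ^ 2 := by positivity
    nlinarith [sq_nonneg y]
  have hys : y < s := by
    nlinarith [Real.sq_sqrt hpos.le, Real.sqrt_nonneg (y ^ 2 + 4 * (m - 1) ^ 2 * (1 - m * ρ) ^ 2)]
  have hd := ((hasDerivAt_id y).neg.add
    (((hasDerivAt_pow 2 y).add_const (4 * (m - 1) ^ 2 * (1 - m * ρ) ^ 2)).sqrt hpos.ne')).div_const
      (2 * (m - 1) * (1 - m * ρ))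
  refine ⟨_, ?_, hd⟩
  have hs : 0 < s := Real.sqrt_pos.2 hpos
  apply div_neg_of_neg_of_pos _ (by linarith)
  have : (2 : ℕ) * y ^ (2 - 1) / (2 * s) < 1 := by
    rw [div_lt_one (by positivity)]; push_cast; linarith
  linarith

theorem einsteinF_denominator_pos (hm : 1 < m) (hρ : 2 * m * ρ < 1) (hy : 0 < y)
    (hx : einsteinH m ρ y ≤ x) :
    0 < -(m * (m - 1) * (1 - (m + 1) * ρ) * (1 - x ^ 2)) + (1 + m - 4 * m * ρ) * x * y := by
  have hA := einstein_coeff_pos hm hρ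
  have hB : 0 ≤ m * (m - 1) * (1 - (m + 1) * ρ) := by
    have : 0 < 1 - (m + 1) * ρ := by rcases le_or_gt ρ 0 with h | h <;> nlinarith
    positivity
  obtain ⟨hh, hquad⟩ := einsteinH_spec hA y
  have hxy : 0 < x * y := mul_pos (hh.trans_le hx) hy
  have hnum : (m - 1) * (1 - m * ρ) * (1 - x ^ 2) ≤ x * y := by
    have : 0 ≤ (m - 1) * (1 - m * ρ) * (x + einsteinH m ρ y) + y :=
      add_nonneg (mul_nonneg hA.le (by linarith)) hy.le
    nlinarith [mul_nonneg (sub_nonneg.2 hx) this]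
  have hgap : 0 < (m - 1) * (1 - 2 * m * ρ) ^ 2 * (x * y) := by
    have : 0 < 1 - 2 * m * ρ := by linarith
    have : 0 < m - 1 := by linarith
    positivity
  refine pos_of_mul_pos_right (a := (m - 1) * (1 - m * ρ)) ?_ hA.le
  nlinarith [mul_le_mul_of_nonneg_left hnum hB]

theorem einsteinF_one_neg (hm : 1 < m) (hρ : 2 * m * ρ < 1) (hy : 0 < y) :
    einsteinF m ρ 1 y < 0 := by
  have : 0 < (1 + m - 4 * m * ρ) * y := mul_pos (by linarith) hy
  simp only [einsteinF, one_pow, sub_self, mul_zero, neg_zero, zero_add, one_mul, zero_sub,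
    mul_one]
  exact div_neg_of_neg_of_pos (by linarith) this

theorem tendsto_einsteinH (hA : 0 < (m - 1) * (1 - m * ρ)) :
    Tendsto (einsteinH m ρ) (𝓝[>] 0) (𝓝 1) := by
  obtain ⟨_, _, hd⟩ := exists_hasDerivAt_einsteinH hA 0
  obtain ⟨hpos, hquad⟩ := einsteinH_spec hA 0
  have h0 : einsteinH m ρ 0 = 1 := by
    have : einsteinH m ρ 0 ^ 2 = 1 := by
      rw [mul_zero] at hquad
      nlinarith [(mul_eq_zero.1 hquad).resolve_left hA.ne']
    nlinarith
  exact h0 ▸ hd.continuousAt.tendsto.mono_left nhdsWithin_le_nhds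

theorem isFunnel_einstein (hm : 1 < m) (hρ : 2 * m * ρ < 1) :
    IsFunnel (einsteinF m ρ) (einsteinH m ρ) := by
  have hA := einstein_coeff_pos hm hρ
  refine ⟨fun y hy x hx => ?_, fun y hy => einsteinH_le_one hA hy.le, fun y _ => ?_,
    fun y hy => einsteinF_one_neg hm hρ hy⟩
  · have hden := einsteinF_denominator_pos hm hρ hy hx.1
    simp only [einsteinF]
    exact ContDiffAt.div (by fun_prop) (by fun_prop) hden.ne'
  · obtain ⟨h', hneg, hd⟩ := exists_hasDerivAt_einsteinH hA y
    exact ⟨h', hd, (einsteinF_einsteinH hA y).symm ▸ hneg⟩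

end Einstein

/-- There is a solution `x̄` of `x' = F(x, ·)` on `(0, ∞)`, trapped between `h` and `1`,
with `x̄(y) → 1` as `y → 0⁺`. -/
theorem exists_limit_solution (n : ℕ) (hn : 3 ≤ n) (m ρ : ℝ) (hm : m = (n : ℝ) - 1)
    (hρ : ρ < 1 / (2 * m)) :
    ∃ x : ℝ → ℝ,
      (∀ y > (0 : ℝ), HasDerivAt x (einsteinF m ρ (x y) y) y) ∧
      (∀ y > (0 : ℝ), einsteinH m ρ y ≤ x y ∧ x y ≤ 1) ∧
      Filter.Tendsto x (nhdsWithin 0 (Set.Ioi 0)) (nhds 1) := by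
  have hm1 : 1 < m := by
    have : (3 : ℝ) ≤ n := by exact_mod_cast hn
    linarith
  have hmρ : 2 * m * ρ < 1 := by
    have := (lt_div_iff₀ (by linarith : (0 : ℝ) < 2 * m)).1 hρ
    linarith
  exact (isFunnel_einstein hm1 hmρ).exists_solution
    (tendsto_einsteinH (einstein_coeff_pos hm1 hmρ))
end

section
/- Let n ≥ 3 be an integer, m = n − 1, and ρ = 1/m, so that the system (S_ρ) reads x′ = x·y and y′ = −(m−1)(1 − x²) − (m−3)·x·y. Let (x, y) be a solution on ℝ such that for all t ∈ ℝ: 0 < x(t) < 1, x′(t) < 0, and (x(t), y(t)) → (1, 0) as t → −∞. Then, as t → +∞: x(t)·y(t) → 0, y(t)/t → −(n−2), and (log x(t))/t² → −(n−2)/2. -/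
/-!
With `h = y + (m - 3) x` the system gives `h' = -(m - 1)(1 - x²)`. Since `x` decreases, `h'` stays
below a negative constant, so `y → -∞`; as `y` is the logarithmic derivative of `x`, `x` then
decays exponentially and `h' → -(m - 1)`. An `∞/∞` L'Hôpital rule at `+∞` turns this into
`y / t → -(m - 1)` and, applied to `log x` (whose derivative is `y`), into
`log x / t² → -(m - 1) / 2`; finally `x y = (y / t) (t x) → 0`.
-/

open Filter Real Set Topology

theorem lhopital_infty_atTop {g φ g' φ' : ℝ → ℝ} {c : ℝ}
    (hg : ∀ᶠ t in atTop, HasDerivAt g (g' t) t)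
    (hφ : ∀ᶠ t in atTop, HasDerivAt φ (φ' t) t) (hφ' : ∀ᶠ t in atTop, 0 < φ' t)
    (hφtop : Tendsto φ atTop atTop)
    (hlim : Tendsto (fun t => g' t / φ' t) atTop (𝓝 c)) :
    Tendsto (fun t => g t / φ t) atTop (𝓝 c) := by
  rw [Metric.tendsto_nhds]
  intro ε hε
  obtain ⟨T, hT⟩ := eventually_atTop.1 <|
    hg.and <| hφ.and <| hφ'.and <| Metric.tendsto_nhds.1 hlim (ε / 2) (half_pos hε)
  set G := fun s => g s - c * φ s
  have hG : ∀ s ≥ T, HasDerivAt G (g' s - c * φ' s) s := fun s hs =>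
    (hT s hs).1.sub ((hT s hs).2.1.const_mul c)
  have hG' : ∀ s ≥ T, |g' s - c * φ' s| ≤ ε / 2 * φ' s := by
    intro s hs
    obtain ⟨-, -, hpos, hdist⟩ := hT s hs
    rw [Real.dist_eq, div_sub' hpos.ne', abs_div, abs_of_pos hpos, div_lt_iff₀ hpos] at hdist
    rw [mul_comm c]
    exact hdist.le
  have hbound : ∀ t ≥ T, |G t - G T| ≤ ε / 2 * (φ t - φ T) := by
    intro t ht
    refine image_norm_le_of_norm_deriv_right_le_deriv_boundary' (f := fun s => G s - G T)
      (f' := fun s => g' s - c * φ' s) (B := fun s => ε / 2 * (φ s - φ T))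
      (B' := fun s => ε / 2 * φ' s) ?_ ?_ (by simp) ?_ ?_ ?_ ⟨ht, le_rfl⟩
    · exact fun s hs => ((hG s hs.1).sub_const _).continuousAt.continuousWithinAt
    · exact fun s hs => ((hG s hs.1).sub_const _).hasDerivWithinAt
    · exact fun s hs => ((hT s hs.1).2.1.sub_const _).continuousAt.continuousWithinAt.const_mul _
    · exact fun s hs => (((hT s hs.1).2.1.sub_const _).const_mul _).hasDerivWithinAt
    · exact fun s hs => hG' s hs.1
  set K := |G T| + ε / 2 * |φ T| with hKdef
  filter_upwards [eventually_ge_atTop T, hφtop.eventually_gt_atTop (2 * K / ε)] with t hTt hKt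
  have hφt : 0 < φ t := lt_of_le_of_lt (by positivity) hKt
  rw [Real.dist_eq, div_sub' hφt.ne', abs_div, abs_of_pos hφt, div_lt_iff₀ hφt]
  have hφT := mul_le_mul_of_nonneg_left (neg_le_abs (φ T)) (half_pos hε).le
  rw [div_lt_iff₀ hε] at hKt
  calc |g t - φ t * c| = |(G t - G T) + G T| := by rw [sub_add_cancel, mul_comm]
    _ ≤ |G t - G T| + |G T| := abs_add_le _ _
    _ < ε * φ t := by linarith [hbound t hTt, hKdef]

theorem tendsto_div_of_tendsto_deriv {g g' : ℝ → ℝ} {c : ℝ}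
    (hg : ∀ᶠ t in atTop, HasDerivAt g (g' t) t) (hlim : Tendsto g' atTop (𝓝 c)) :
    Tendsto (fun t => g t / t) atTop (𝓝 c) :=
  lhopital_infty_atTop hg (.of_forall hasDerivAt_id) (.of_forall fun _ => one_pos) tendsto_id
    (by simpa using hlim)

theorem tendsto_div_sq_of_tendsto_deriv_div {g g' : ℝ → ℝ} {c : ℝ}
    (hg : ∀ᶠ t in atTop, HasDerivAt g (g' t) t)
    (hlim : Tendsto (fun t => g' t / t) atTop (𝓝 c)) :
    Tendsto (fun t => g t / t ^ 2) atTop (𝓝 (c / 2)) :=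
  lhopital_infty_atTop hg (φ' := fun t => 2 * t)
    (.of_forall fun t => by simpa using hasDerivAt_pow 2 t)
    ((eventually_gt_atTop 0).mono fun _ ht => by positivity) (tendsto_pow_atTop two_ne_zero)
    ((hlim.div_const 2).congr fun t => (by ring : g' t / t / 2 = g' t / (2 * t)))

theorem tendsto_mul_of_logDeriv_tendsto_atBot {u v : ℝ → ℝ} (hu : ∀ t, 0 < u t)
    (hdu : ∀ t, HasDerivAt u (u t * v t) t) (hv : Tendsto v atTop atBot) :
    Tendsto (fun t => t * u t) atTop (𝓝 0) := by
  obtain ⟨T, hT⟩ := eventually_atTop.1 (hv.eventually_le_atBot (-1))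
  have hdw : ∀ t, HasDerivAt (fun s => u s * exp s) (u t * exp t * (v t + 1)) t := fun t =>
    ((hdu t).fun_mul (hasDerivAt_exp t)).congr_deriv (by ring)
  have hanti : AntitoneOn (fun s => u s * exp s) (Ici T) := by
    refine antitoneOn_of_hasDerivWithinAt_nonpos (convex_Ici T)
      (fun s _ => (hdw s).continuousAt.continuousWithinAt) (fun s _ => (hdw s).hasDerivWithinAt)
      fun s hs => ?_
    rw [interior_Ici] at hs
    exact mul_nonpos_of_nonneg_of_nonpos (by positivity [hu s]) (by linarith [hT s hs.le])
  have hdecay := (tendsto_pow_mul_exp_neg_atTop_nhds_zero 1).const_mul (u T * exp T)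
  rw [mul_zero] at hdecay
  refine squeeze_zero' ((eventually_ge_atTop 0).mono fun t ht => by positivity [hu t]) ?_ hdecay
  filter_upwards [eventually_ge_atTop T, eventually_ge_atTop 0] with t hTt ht
  calc t * u t = u t * exp t * (t ^ 1 * exp (-t)) := by
        rw [pow_one, exp_neg]; field_simp
    _ ≤ u T * exp T * (t ^ 1 * exp (-t)) :=
        mul_le_mul_of_nonneg_right (hanti self_mem_Ici hTt hTt) (by positivity)

/-- The system `(S_ρ)` at `ρ = 1 / m`. -/
structure CigarSolution (m : ℝ) (x y : ℝ → ℝ) : Prop where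
  hasDerivAt_x : ∀ t, HasDerivAt x (x t * y t) t
  hasDerivAt_y : ∀ t, HasDerivAt y (-((m - 1) * (1 - x t ^ 2)) - (m - 3) * (x t * y t)) t

namespace CigarSolution

variable {m : ℝ} {x y : ℝ → ℝ}

theorem hasDerivAt_y_add (h : CigarSolution m x y) (t : ℝ) :
    HasDerivAt (fun s => y s + (m - 3) * x s) (-((m - 1) * (1 - x t ^ 2))) t :=
  ((h.hasDerivAt_y t).add ((h.hasDerivAt_x t).const_mul (m - 3))).congr_deriv (by ring)

theorem tendsto_y_atBot (h : CigarSolution m x y) (hm : 1 < m) (hx0 : ∀ t, 0 < x t)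
    (hx1 : ∀ t, x t < 1) (hanti : Antitone x) : Tendsto y atTop atBot := by
  set c := (m - 1) * (1 - x 0 ^ 2)
  have hc : 0 < c := mul_pos (by linarith) (by nlinarith [hx0 0, hx1 0])
  have hlin : ∀ t, 0 ≤ t → y t + (m - 3) * x t - (y 0 + (m - 3) * x 0) ≤ -c * (t - 0) := by
    intro t ht
    refine (convex_Ici 0).image_sub_le_mul_sub_of_deriv_le
      (fun s _ => (h.hasDerivAt_y_add s).continuousAt.continuousWithinAt)
      (fun s _ => (h.hasDerivAt_y_add s).differentiableAt.differentiableWithinAt) (fun s hs => ?_)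
      0 self_mem_Ici t ht ht
    rw [interior_Ici] at hs
    have hxs : x s ≤ x 0 := hanti (le_of_lt hs)
    rw [(h.hasDerivAt_y_add s).deriv, neg_le_neg_iff]
    exact mul_le_mul_of_nonneg_left (by nlinarith [hx0 s]) (by linarith)
  have hx_bound : ∀ t, -((m - 3) * x t) ≤ |m - 3| := fun t =>
    calc -((m - 3) * x t) ≤ |m - 3| * |x t| := (neg_le_abs _).trans (abs_mul _ _).le
      _ ≤ |m - 3| := mul_le_of_le_one_right (abs_nonneg _)
        (abs_le.2 ⟨by linarith [hx0 t], (hx1 t).le⟩)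
  refine tendsto_atBot_mono' atTop ((eventually_ge_atTop 0).mono fun t ht => ?_)
    (tendsto_atBot_add_const_left _ (y 0 + (m - 3) * x 0 + |m - 3|)
      (tendsto_id.const_mul_atTop_of_neg (neg_neg_of_pos hc)))
  dsimp only [id]
  linarith [hlin t ht, hx_bound t]

theorem tendsto_y_div (h : CigarSolution m x y) (hx : Tendsto x atTop (𝓝 0)) :
    Tendsto (fun t => y t / t) atTop (𝓝 (-(m - 1))) := by
  have hderiv : Tendsto (fun t => -((m - 1) * (1 - x t ^ 2))) atTop (𝓝 (-(m - 1))) := by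
    convert (((tendsto_const_nhds (x := (1 : ℝ))).sub (hx.pow 2)).const_mul (m - 1)).neg using 2
    ring
  have hx_div : Tendsto (fun t => (m - 3) * x t / t) atTop (𝓝 0) :=
    (hx.const_mul (m - 3)).div_atTop tendsto_id
  simpa using ((tendsto_div_of_tendsto_deriv (.of_forall h.hasDerivAt_y_add) hderiv).sub
    hx_div).congr fun t => by ring

end CigarSolution

theorem cigar_trajectory_asymptotics_general (n : ℕ) (hn : 3 ≤ n) (m : ℝ)
    (hm : m = (n : ℝ) - 1) (x y : ℝ → ℝ)
    (hdx : Differentiable ℝ x) (hdy : Differentiable ℝ y)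
    (heq1 : ∀ t : ℝ, deriv x t = x t * y t)
    (heq2 : ∀ t : ℝ, deriv y t = -((m - 1) * (1 - x t ^ 2)) - (m - 3) * (x t * y t))
    (hx : ∀ t : ℝ, 0 < x t ∧ x t < 1) (hx' : ∀ t : ℝ, deriv x t < 0) :
    Filter.Tendsto (fun t => x t * y t) Filter.atTop (nhds 0) ∧
      Filter.Tendsto (fun t => y t / t) Filter.atTop (nhds (-((n : ℝ) - 2))) ∧
      Filter.Tendsto (fun t => Real.log (x t) / t ^ 2) Filter.atTop
        (nhds (-((n : ℝ) - 2) / 2)) := by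
  have hm1 : 1 < m := by
    rw [hm]; linarith [show (3 : ℝ) ≤ n by exact_mod_cast hn]
  have hsol : CigarSolution m x y :=
    ⟨fun t => heq1 t ▸ (hdx t).hasDerivAt, fun t => heq2 t ▸ (hdy t).hasDerivAt⟩
  have hy_bot := hsol.tendsto_y_atBot hm1 (fun t => (hx t).1) (fun t => (hx t).2)
    (antitone_of_deriv_nonpos hdx fun t => (hx' t).le)
  have htx := tendsto_mul_of_logDeriv_tendsto_atBot (fun t => (hx t).1) hsol.hasDerivAt_x hy_bot
  have hy := hsol.tendsto_y_div <| (htx.div_atTop tendsto_id).congr' <|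
    (eventually_ne_atTop 0).mono fun t ht => by simp [ht]
  have hlimit : -(m - 1) = -((n : ℝ) - 2) := by rw [hm]; ring
  refine ⟨?_, hlimit ▸ hy, ?_⟩
  · simpa using (hy.mul htx).congr' <| (eventually_ne_atTop 0).mono fun t ht => by
      field_simp
  · have hlog : ∀ t, HasDerivAt (fun s => Real.log (x s)) (y t) t := fun t =>
      ((hsol.hasDerivAt_x t).log (hx t).1.ne').congr_deriv (by field_simp [(hx t).1.ne'])
    exact hlimit ▸ tendsto_div_sq_of_tendsto_deriv_div (.of_forall hlog) hy

/-- Proposition 4.4 for `ρ = 1/m` (the cigar-type soliton): for the system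
`x′ = x·y`, `y′ = −(m−1)(1−x²) − (m−3)·x·y`, along a trajectory with `0 < x < 1`,
`x′ < 0`, emanating from `(1,0)` at `t = −∞`, one has, as `t → +∞`:
`x·y → 0`, `y/t → −(n−2)`, and `log x / t² → −(n−2)/2`. -/
theorem cigar_trajectory_asymptotics (n : ℕ) (hn : 3 ≤ n) (m ρ : ℝ)
    (hm : m = (n : ℝ) - 1) (hρ : ρ = 1 / m) (x y : ℝ → ℝ)
    (hdx : Differentiable ℝ x) (hdy : Differentiable ℝ y)
    (heq1 : ∀ t : ℝ, deriv x t = x t * y t)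
    (heq2 : ∀ t : ℝ, deriv y t = -((m - 1) * (1 - x t ^ 2)) - (m - 3) * (x t * y t))
    (hx : ∀ t : ℝ, 0 < x t ∧ x t < 1) (hx' : ∀ t : ℝ, deriv x t < 0)
    (hlim : Filter.Tendsto (fun t => (x t, y t)) Filter.atBot (nhds (1, 0))) :
    Filter.Tendsto (fun t => x t * y t) Filter.atTop (nhds 0) ∧
      Filter.Tendsto (fun t => y t / t) Filter.atTop (nhds (-((n : ℝ) - 2))) ∧
      Filter.Tendsto (fun t => Real.log (x t) / t ^ 2) Filter.atTop
        (nhds (-((n : ℝ) - 2) / 2)) :=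
  cigar_trajectory_asymptotics_general n hn m hm x y hdx hdy heq1 heq2 hx hx'
end

section
/- Let n ≥ 3 be an integer. There do not exist functions f, R : [0, ∞) → ℝ, with f twice differentiable and R differentiable, such that f′(0) > 0, R(0) > 0, R(r) ≥ 0 for all r ≥ 0, f″(r) = R(r)/(2(n−1)) for all r ≥ 0, and R′(r)·f′(r) ≥ R(r)²/(n−1) for all r ≥ 0. -/
/-!
Put `c = n - 1` and `g = f′`. Since `g′ = R/(2c) ≥ 0`, `g ≥ g(0) > 0`. The Bianchi-type inequality
`R′g ≥ R²/c = 2Rg′` says exactly that `R/g²` is nondecreasing, so `g′ = (R/g²)·g²/(2c) ≥ κ g²` with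
`κ = R(0)/(2c g(0)²) > 0`. A positive solution of `g′ ≥ κ g²` blows up before `r = 1/(κ g(0))`,
because `(1/g)′ ≤ -κ`.
-/

open Set

theorem monotoneOn_Ici_of_deriv_nonneg {h : ℝ → ℝ} {a : ℝ}
    (hd : ∀ r ≥ a, DifferentiableAt ℝ h r) (hnn : ∀ r > a, 0 ≤ deriv h r) :
    MonotoneOn h (Ici a) :=
  monotoneOn_of_deriv_nonneg (convex_Ici a)
    (fun r hr => (hd r hr).continuousAt.continuousWithinAt)
    (fun r hr => (hd r (le_of_lt (by rwa [interior_Ici] at hr))).differentiableWithinAt)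
    (fun r hr => hnn r (by rwa [interior_Ici] at hr))

theorem monotoneOn_div_sq_of_two_mul_deriv_le {u v : ℝ → ℝ} {a : ℝ}
    (hu : ∀ r ≥ a, DifferentiableAt ℝ u r) (hv : ∀ r ≥ a, DifferentiableAt ℝ v r)
    (hpos : ∀ r ≥ a, 0 < v r) (h : ∀ r > a, 2 * u r * deriv v r ≤ deriv u r * v r) :
    MonotoneOn (fun r => u r / v r ^ 2) (Ici a) := by
  refine monotoneOn_Ici_of_deriv_nonneg
    (fun r hr => (hu r hr).div ((hv r hr).pow 2) (pow_pos (hpos r hr) 2).ne') fun r hr => ?_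
  have hvr := hpos r hr.le
  have hderiv : HasDerivAt (fun r => u r / v r ^ 2)
      (v r * (deriv u r * v r - 2 * u r * deriv v r) / (v r ^ 2) ^ 2) r := by
    refine ((hu r hr.le).hasDerivAt.fun_div ((hv r hr.le).hasDerivAt.fun_pow 2)
      (pow_pos hvr 2).ne').congr_deriv ?_
    norm_num
    ring
  rw [hderiv.deriv]
  have := sub_nonneg.mpr (h r hr)
  positivity

theorem exists_nonpos_of_mul_sq_le_deriv {g : ℝ → ℝ} {κ : ℝ} (hκ : 0 < κ)
    (hd : ∀ r ≥ 0, DifferentiableAt ℝ g r) (hg' : ∀ r > 0, κ * g r ^ 2 ≤ deriv g r) :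
    ∃ r ≥ 0, g r ≤ 0 := by
  by_contra! hpos
  have hmono : MonotoneOn (fun r => -(g r)⁻¹ - κ * r) (Ici 0) := by
    refine monotoneOn_Ici_of_deriv_nonneg
      (fun r hr => (((hd r hr).inv (hpos r hr).ne').neg).sub (differentiableAt_id.const_mul κ))
      fun r hr => ?_
    have hgr := hpos r hr.le
    have hderiv : HasDerivAt (fun r => -(g r)⁻¹ - κ * r) (deriv g r / g r ^ 2 - κ) r := by
      refine ((((hd r hr.le).hasDerivAt.fun_inv hgr.ne').fun_neg).fun_sub
        ((hasDerivAt_id' r).const_mul κ)).congr_deriv ?_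
      ring
    rw [hderiv.deriv, sub_nonneg, le_div_iff₀ (by positivity)]
    exact hg' r hr
  have hg0 := hpos 0 le_rfl
  set r := (κ * g 0)⁻¹
  have hr : 0 ≤ r := by positivity
  have hκr : κ * r = (g 0)⁻¹ := by simp only [r]; field_simp
  have hmono_r := hmono self_mem_Ici hr hr
  simp only [mul_zero, sub_zero, hκr] at hmono_r
  have := inv_pos.mpr (hpos r hr)
  linarith

/-- Radial reduction of the triviality of complete gradient steady Schouten solitons:
there is no pair `(f, R)` on `[0, ∞)` with `f′(0) > 0`, `R(0) > 0`, `R ≥ 0`,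
`f″ = R/(2(n−1))` and `R′·f′ ≥ R²/(n−1)`. -/
theorem no_steady_schouten_radial_profile (n : ℕ) (hn : 3 ≤ n) :
    ¬ ∃ f R : ℝ → ℝ,
      (∀ r ≥ (0 : ℝ), DifferentiableAt ℝ f r) ∧
      (∀ r ≥ (0 : ℝ), DifferentiableAt ℝ (deriv f) r) ∧
      (∀ r ≥ (0 : ℝ), DifferentiableAt ℝ R r) ∧
      0 < deriv f 0 ∧ 0 < R 0 ∧ (∀ r ≥ (0 : ℝ), 0 ≤ R r) ∧
      (∀ r ≥ (0 : ℝ), deriv (deriv f) r = R r / (2 * ((n : ℝ) - 1))) ∧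
      (∀ r ≥ (0 : ℝ), (R r) ^ 2 / ((n : ℝ) - 1) ≤ deriv R r * deriv f r) := by
  rintro ⟨f, R, -, hf', hR, hf'0, hR0, hRnn, hf'', hbianchi⟩
  set c : ℝ := (n : ℝ) - 1
  have hc : 0 < c := by
    have : (3 : ℝ) ≤ n := by exact_mod_cast hn
    linarith
  have hg_mono : MonotoneOn (deriv f) (Ici 0) :=
    monotoneOn_Ici_of_deriv_nonneg hf' fun r hr => by
      rw [hf'' r hr.le]
      exact div_nonneg (hRnn r hr.le) (by positivity)
  have hg_pos : ∀ r ≥ 0, 0 < deriv f r := fun r hr => hf'0.trans_le (hg_mono self_mem_Ici hr hr)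
  have hΦ_mono : MonotoneOn (fun r => R r / deriv f r ^ 2) (Ici 0) :=
    monotoneOn_div_sq_of_two_mul_deriv_le hR hf' hg_pos fun r hr =>
      calc 2 * R r * deriv (deriv f) r = R r ^ 2 / c := by rw [hf'' r hr.le]; field_simp
        _ ≤ deriv R r * deriv f r := hbianchi r hr.le
  obtain ⟨r, hr, hg_nonpos⟩ := exists_nonpos_of_mul_sq_le_deriv
    (κ := R 0 / deriv f 0 ^ 2 / (2 * c)) (by have := hg_pos 0 le_rfl; positivity) hf'
    fun r hr =>
      calc R 0 / deriv f 0 ^ 2 / (2 * c) * deriv f r ^ 2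
          ≤ R r / deriv f r ^ 2 / (2 * c) * deriv f r ^ 2 := by
            gcongr ?_ / _ * _
            exact hΦ_mono self_mem_Ici hr.le hr.le
        _ = deriv (deriv f) r := by
            have := hg_pos r hr.le
            rw [hf'' r hr.le]
            field_simp
  exact (hg_pos r hr).not_ge hg_nonpos
end

section
/- Let λ > 0. Suppose f, R : [0, ∞) → ℝ, with f twice differentiable and R differentiable, satisfy: f′(0) > 0, R(r) ≥ 0 for all r ≥ 0, f″(r) = R(r)/4 + λ for all r ≥ 0, and R′(r)·f′(r) ≥ R(r)²/2 − 2λ·R(r) for all r ≥ 0. Then R is bounded on [0, ∞). -/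
/-!
`f″ = R/4 + λ > 0` makes `f′ ≥ f′(0) > 0`, and then `R′·f′ ≥ R (R/2 - 2λ)` forces `R′ > 0`
wherever `R > 4λ`. So if `R(r₁) > 12λ`, then `R ≥ R(r₁)` on `[r₁, ∞)`, and there
`(f′/R)′ ≤ -1/4 + 3λ/R ≤ -1/4 + 3λ/R(r₁) < 0`: the positive function `f′/R` would decrease
linearly and eventually become negative. Hence `0 ≤ R ≤ 12λ`.
-/

open Set

section HalfLine

variable {g : ℝ → ℝ} {a : ℝ}

theorem monotoneOn_Ici_of_deriv_nonneg_s17 (hg : ∀ x ≥ a, DifferentiableAt ℝ g x)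
    (hg' : ∀ x > a, 0 ≤ deriv g x) : MonotoneOn g (Ici a) :=
  monotoneOn_of_deriv_nonneg (convex_Ici a)
    (fun x hx => (hg x hx).continuousAt.continuousWithinAt)
    (fun x hx => (hg x (interior_subset hx)).differentiableWithinAt)
    (fun x hx => hg' x (by rwa [interior_Ici] at hx))

theorem le_image_of_deriv_pos_on_level_set (hg : ∀ x ≥ a, DifferentiableAt ℝ g x)
    (hg' : ∀ x ≥ a, g x = g a → 0 < deriv g x) {x : ℝ} (hx : a ≤ x) : g a ≤ g x := by
  simpa using image_le_of_deriv_right_lt_deriv_boundary (f := fun y => -g y)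
    (f' := fun y => -deriv g y) (B := fun _ => -g a) (B' := fun _ => 0)
    (fun y hy => (hg y hy.1).continuousAt.neg.continuousWithinAt)
    (fun y hy => (hg y hy.1).hasDerivAt.neg.hasDerivWithinAt) le_rfl
    (fun _ => hasDerivAt_const _ _)
    (fun y hy hgy => neg_neg_of_pos (hg' y hy.1 (neg_inj.mp hgy))) ⟨hx, le_rfl⟩

theorem exists_nonpos_of_deriv_le_neg (hg : ∀ x ≥ a, DifferentiableAt ℝ g x) {δ : ℝ}
    (hδ : 0 < δ) (hg' : ∀ x > a, deriv g x ≤ -δ) : ∃ x ≥ a, g x ≤ 0 := by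
  set x := a + max (g a) 0 / δ
  have hax : a ≤ x := le_add_of_nonneg_right (by positivity)
  have hdrop : g x - g a ≤ -δ * (x - a) :=
    (convex_Ici a).image_sub_le_mul_sub_of_deriv_le
      (fun y hy => (hg y hy).continuousAt.continuousWithinAt)
      (fun y hy => (hg y (interior_subset hy)).differentiableWithinAt)
      (fun y hy => hg' y (by rwa [interior_Ici] at hy)) a self_mem_Ici x hax hax
  have hδx : δ * (x - a) = max (g a) 0 := by simp only [x, add_sub_cancel_left]; field_simp
  exact ⟨x, hax, by linarith [le_max_left (g a) 0]⟩

end HalfLine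

theorem deriv_deriv_div_le (lam : ℝ) {f R : ℝ → ℝ} {x : ℝ}
    (hf' : DifferentiableAt ℝ (deriv f) x) (hR : DifferentiableAt ℝ R x) (hRx : 0 < R x)
    (hfR : deriv (deriv f) x = R x / 4 + lam)
    (hRf : R x ^ 2 / 2 - 2 * lam * R x ≤ deriv R x * deriv f x) :
    deriv (fun r => deriv f r / R r) x ≤ -1 / 4 + 3 * lam / R x := by
  rw [(hf'.hasDerivAt.fun_div hR.hasDerivAt hRx.ne').deriv, hfR,
    div_le_iff₀ (by positivity)]
  field_simp
  nlinarith

theorem shrinking_schouten_scalar_bounded_general (lam : ℝ) (hlam : 0 < lam) (f R : ℝ → ℝ)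
    (hf' : ∀ r ≥ (0 : ℝ), DifferentiableAt ℝ (deriv f) r)
    (hR : ∀ r ≥ (0 : ℝ), DifferentiableAt ℝ R r)
    (hf0 : 0 < deriv f 0) (hRnonneg : ∀ r ≥ (0 : ℝ), 0 ≤ R r)
    (hfR : ∀ r ≥ (0 : ℝ), deriv (deriv f) r = R r / 4 + lam)
    (hRf : ∀ r ≥ (0 : ℝ), (R r) ^ 2 / 2 - 2 * lam * R r ≤ deriv R r * deriv f r) :
    ∃ M : ℝ, ∀ r ≥ (0 : ℝ), |R r| ≤ M := by
  have hf'_pos : ∀ r ≥ (0 : ℝ), 0 < deriv f r := fun r hr =>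
    hf0.trans_le <| monotoneOn_Ici_of_deriv_nonneg_s17 hf'
      (fun x hx => by rw [hfR x hx.le]; linarith [hRnonneg x hx.le]) self_mem_Ici hr hr
  refine ⟨12 * lam, fun r₁ hr₁ => ?_⟩
  rw [abs_of_nonneg (hRnonneg r₁ hr₁)]
  by_contra! hbig
  have hR_ge : ∀ x ≥ r₁, R r₁ ≤ R x := fun x hx =>
    le_image_of_deriv_pos_on_level_set (fun y hy => hR y (hr₁.trans hy))
      (fun y hy hRy => by
        have := hRf y (hr₁.trans hy)
        have := hf'_pos y (hr₁.trans hy)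
        nlinarith) hx
  have hR_pos : ∀ x ≥ r₁, 0 < R x := fun x hx => by linarith [hR_ge x hx]
  have hδ : 0 < 1 / 4 - 3 * lam / R r₁ := by
    rw [sub_pos, div_lt_iff₀ (hR_pos r₁ le_rfl)]; linarith
  obtain ⟨x, hx, hnonpos⟩ := exists_nonpos_of_deriv_le_neg
    (fun y hy => (hf' y (hr₁.trans hy)).div (hR y (hr₁.trans hy)) (hR_pos y hy).ne') hδ
    (fun y hy => (deriv_deriv_div_le lam (hf' y (hr₁.trans hy.le)) (hR y (hr₁.trans hy.le))
      (hR_pos y hy.le) (hfR y (hr₁.trans hy.le)) (hRf y (hr₁.trans hy.le))).trans <| by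
        have := div_le_div_of_nonneg_left (by positivity : 0 ≤ 3 * lam) (hR_pos r₁ le_rfl)
          (hR_ge y hy.le)
        linarith)
  exact hnonpos.not_gt (div_pos (hf'_pos x (hr₁.trans hx)) (hR_pos x hx))

/-- Step 1 of the classification of complete 3-dimensional gradient shrinking Schouten
solitons: along the radial profile, with `f′(0) > 0`, `R ≥ 0`, `f″ = R/4 + λ` and
`R′·f′ ≥ R²/2 − 2λR`, the scalar curvature `R` is bounded on `[0, ∞)`. -/
theorem shrinking_schouten_scalar_bounded (lam : ℝ) (hlam : 0 < lam) (f R : ℝ → ℝ)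
    (hf : ∀ r ≥ (0 : ℝ), DifferentiableAt ℝ f r)
    (hf' : ∀ r ≥ (0 : ℝ), DifferentiableAt ℝ (deriv f) r)
    (hR : ∀ r ≥ (0 : ℝ), DifferentiableAt ℝ R r)
    (hf0 : 0 < deriv f 0) (hRnonneg : ∀ r ≥ (0 : ℝ), 0 ≤ R r)
    (hfR : ∀ r ≥ (0 : ℝ), deriv (deriv f) r = R r / 4 + lam)
    (hRf : ∀ r ≥ (0 : ℝ), (R r) ^ 2 / 2 - 2 * lam * R r ≤ deriv R r * deriv f r) :
    ∃ M : ℝ, ∀ r ≥ (0 : ℝ), |R r| ≤ M :=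
  shrinking_schouten_scalar_bounded_general lam hlam f R hf' hR hf0 hRnonneg hfR hRf
end
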